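/- arXiv:1401.5597 — 11 statements merged into one kernel-verified Lean document; each statement's English description precedes it below -/
import Mathlib

section
/- Let u : [0,∞) → ℝ⁴ be a differentiable function satisfying u'(t) = F(u(t)) for all t ≥ 0, where F is the ZIP regulatory vector field with parameter f ∈ [0,1). If u(0) ∈ S = [0,1]⁴, then u(t) ∈ S for all t ≥ 0; that is, the cube S is positively invariant for the ZIP regulatory system. -/
/-- The ZIP regulatory vector field on ℝ⁴ (components indexed by `Fin 4`). -/
noncomputable def zipField (κ γ₁ γ₂ γ₃ f : ℝ) (u : Fin 4 → ℝ) : Fin 4 → ℝ :=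
  ![κ * (u 2) ^ 2 * (1 - u 0) - u 0,
    u 0 * f - u 1,
    1 - γ₁ * u 2 * u 3 - u 2,
    γ₂ * u 1 - γ₃ * u 2 * u 3 - (1 + γ₂ * u 1) * u 3]

/-! The squared distance `φ(t)` from `u(t)` to the cube satisfies `φ' ≤ C φ`. Indeed, let `p` be
the point of the cube nearest to `u`. The field does not point out of the cube through the faces
containing `p`, so `⟪u - p, F p⟫ ≤ 0`, and the remaining term `⟪u - p, F u - F p⟫` is at most
`C ‖u - p‖²` with `C` given by a Lipschitz constant of `F` on a compact set containing the
trajectory and its projection. Since `φ(0) = 0`, Grönwall's inequality forces `φ ≡ 0`. -/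

open Set
open scoped NNReal

theorem hasDerivAt_max_zero_sq (x : ℝ) :
    HasDerivAt (fun y : ℝ => max y 0 ^ 2) (2 * max x 0) x := by
  refine hasDerivAt_of_hasDerivAt_of_ne' (f := fun y : ℝ => max y 0 ^ 2)
    (g := fun y => 2 * max y 0) (x := 0) (fun y hy => ?_) (by fun_prop) (by fun_prop) x
  rcases hy.lt_or_gt with hy | hy
  · rw [max_eq_right hy.le, mul_zero]
    refine (hasDerivAt_const y 0).congr_of_eventuallyEq ?_
    filter_upwards [eventually_lt_nhds hy] with z hz
    simp [max_eq_right hz.le]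
  · rw [max_eq_left hy.le]
    refine ((hasDerivAt_pow 2 y).congr_deriv (by ring)).congr_of_eventuallyEq ?_
    filter_upwards [eventually_gt_nhds hy] with z hz
    simp [max_eq_left hz.le]

theorem sub_projIcc {a b : ℝ} (h : a ≤ b) (x : ℝ) :
    x - projIcc a b h x = max (x - b) 0 - max (a - x) 0 := by
  rw [coe_projIcc]
  simp only [max_def, min_def]
  split_ifs <;> linarith

theorem sq_sub_projIcc {a b : ℝ} (h : a ≤ b) (x : ℝ) :
    (x - projIcc a b h x) ^ 2 = max (x - b) 0 ^ 2 + max (a - x) 0 ^ 2 := by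
  rw [sub_projIcc]
  simp only [max_def]
  split_ifs <;> nlinarith

theorem hasDerivAt_sq_sub_projIcc {a b : ℝ} (h : a ≤ b) (x : ℝ) :
    HasDerivAt (fun y => (y - projIcc a b h y) ^ 2) (2 * (x - projIcc a b h x)) x := by
  have hsum := ((hasDerivAt_max_zero_sq (x - b)).comp x ((hasDerivAt_id x).sub_const b)).add
    ((hasDerivAt_max_zero_sq (a - x)).comp x ((hasDerivAt_id x).const_sub a))
  rw [funext (sq_sub_projIcc h), sub_projIcc]
  exact hsum.congr_deriv (by ring)

theorem sq_norm_le_sum_sq {ι : Type*} [Fintype ι] (x : ι → ℝ) : ‖x‖ ^ 2 ≤ ∑ i, x i ^ 2 := by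
  have hle : ‖x‖ ≤ √(∑ i, x i ^ 2) := (pi_norm_le_iff_of_nonneg (Real.sqrt_nonneg _)).2 fun i =>
    Real.abs_le_sqrt (Finset.single_le_sum (fun j _ => sq_nonneg (x j)) (Finset.mem_univ i))
  calc ‖x‖ ^ 2 ≤ √(∑ i, x i ^ 2) ^ 2 := pow_le_pow_left₀ (norm_nonneg x) hle 2
    _ = ∑ i, x i ^ 2 := Real.sq_sqrt (Finset.sum_nonneg fun i _ => sq_nonneg (x i))

theorem nonpos_of_deriv_right_le_mul_self {φ φ' : ℝ → ℝ} {K a b : ℝ}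
    (hφ : ContinuousOn φ (Icc a b)) (hφ' : ∀ t ∈ Ico a b, HasDerivWithinAt φ (φ' t) (Ici t) t)
    (ha : φ a ≤ 0) (hle : ∀ t ∈ Ico a b, φ' t ≤ K * φ t) : ∀ t ∈ Icc a b, φ t ≤ 0 := by
  intro t ht
  simpa only [gronwallBound_ε0_δ0] using le_gronwallBound_of_liminf_deriv_right_le hφ
    (fun x hx _ hr => (hφ' x hx).liminf_right_slope_le hr) ha
    (fun x hx => (hle x hx).trans_eq (add_zero _).symm) t ht

section Box

variable {ι : Type*} {a b : ι → ℝ}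

noncomputable def projBox (hab : a ≤ b) (x : ι → ℝ) : ι → ℝ :=
  fun i => projIcc (a i) (b i) (hab i) (x i)

theorem projBox_mem (hab : a ≤ b) (x : ι → ℝ) : projBox hab x ∈ Icc a b :=
  ⟨fun i => (projIcc (a i) (b i) (hab i) (x i)).2.1,
    fun i => (projIcc (a i) (b i) (hab i) (x i)).2.2⟩

theorem continuous_projBox (hab : a ≤ b) : Continuous (projBox hab) :=
  continuous_pi fun i => continuous_subtype_val.comp (continuous_projIcc.comp (continuous_apply i))

theorem projBox_apply_of_lt {hab : a ≤ b} {x : ι → ℝ} {i : ι} (h : projBox hab x i < x i) :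
    projBox hab x i = b i := by
  have := hab i
  simp only [projBox, coe_projIcc, max_def, min_def] at h ⊢
  split_ifs at h ⊢ <;> linarith

theorem projBox_apply_of_gt {hab : a ≤ b} {x : ι → ℝ} {i : ι} (h : x i < projBox hab x i) :
    projBox hab x i = a i := by
  simp only [projBox, coe_projIcc, max_def, min_def] at h ⊢
  split_ifs at h ⊢ <;> linarith

def PointsInwardOnIcc (F : (ι → ℝ) → ι → ℝ) (a b : ι → ℝ) : Prop :=
  ∀ p ∈ Icc a b, ∀ i, (p i = a i → 0 ≤ F p i) ∧ (p i = b i → F p i ≤ 0)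

theorem PointsInwardOnIcc.sub_projBox_mul_nonpos {F : (ι → ℝ) → ι → ℝ}
    (hin : PointsInwardOnIcc F a b) (hab : a ≤ b) (x : ι → ℝ) (i : ι) :
    (x i - projBox hab x i) * F (projBox hab x) i ≤ 0 := by
  have hp := hin _ (projBox_mem hab x) i
  rcases lt_trichotomy (projBox hab x i) (x i) with h | h | h
  · exact mul_nonpos_of_nonneg_of_nonpos (sub_nonneg.2 h.le) (hp.2 (projBox_apply_of_lt h))
  · simp [h]
  · exact mul_nonpos_of_nonpos_of_nonneg (sub_nonpos.2 h.le) (hp.1 (projBox_apply_of_gt h))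

variable [Fintype ι]

/-- Squared Euclidean distance from `x` to the box `Icc a b`. -/
noncomputable def boxPenalty (hab : a ≤ b) (x : ι → ℝ) : ℝ := ∑ i, (x i - projBox hab x i) ^ 2

theorem boxPenalty_eq_zero_of_mem {hab : a ≤ b} {x : ι → ℝ} (hx : x ∈ Icc a b) :
    boxPenalty hab x = 0 :=
  Finset.sum_eq_zero fun i _ => by
    simp [projBox, projIcc_of_mem (hab i) ⟨hx.1 i, hx.2 i⟩]

theorem mem_Icc_of_boxPenalty_nonpos {hab : a ≤ b} {x : ι → ℝ} (hx : boxPenalty hab x ≤ 0) :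
    x ∈ Icc a b := by
  have hzero := (Finset.sum_eq_zero_iff_of_nonneg fun i _ => sq_nonneg _).1
    (hx.antisymm (Finset.sum_nonneg fun i _ => sq_nonneg _))
  have hx : x = projBox hab x := funext fun i => by
    simpa [sub_eq_zero] using hzero i (Finset.mem_univ i)
  exact hx ▸ projBox_mem hab x

theorem HasDerivAt.boxPenalty_comp (hab : a ≤ b) {u : ℝ → ι → ℝ} {u' : ι → ℝ} {t : ℝ}
    (hu : HasDerivAt u u' t) :
    HasDerivAt (fun s => boxPenalty hab (u s))
      (∑ i, 2 * (u t i - projBox hab (u t) i) * u' i) t :=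
  HasDerivAt.fun_sum fun i _ => by
    exact (hasDerivAt_sq_sub_projIcc (hab i) (u t i)).comp t (hasDerivAt_pi.1 hu i)

theorem PointsInwardOnIcc.sum_sub_projBox_mul_le {F : (ι → ℝ) → ι → ℝ}
    (hin : PointsInwardOnIcc F a b) (hab : a ≤ b) {x : ι → ℝ} {K : ℝ≥0}
    (hK : dist (F x) (F (projBox hab x)) ≤ K * dist x (projBox hab x)) :
    ∑ i, (x i - projBox hab x i) * F x i ≤ Fintype.card ι * K * boxPenalty hab x := by
  set p := projBox hab x
  have hterm : ∀ i, (x i - p i) * F x i ≤ ‖x - p‖ * (K * ‖x - p‖) := fun i => calc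
    (x i - p i) * F x i ≤ (x i - p i) * (F x i - F p i) := by
        nlinarith [hin.sub_projBox_mul_nonpos hab x i]
    _ ≤ |x i - p i| * |F x i - F p i| := (le_abs_self _).trans (abs_mul _ _).le
    _ ≤ ‖x - p‖ * ‖F x - F p‖ :=
        mul_le_mul (norm_le_pi_norm (x - p) i) (norm_le_pi_norm (F x - F p) i)
          (abs_nonneg _) (norm_nonneg _)
    _ ≤ ‖x - p‖ * (K * ‖x - p‖) := by
        rw [← dist_eq_norm, ← dist_eq_norm]; gcongr
  calc ∑ i, (x i - p i) * F x i ≤ ∑ _i : ι, ‖x - p‖ * (K * ‖x - p‖) :=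
        Finset.sum_le_sum fun i _ => hterm i
    _ = Fintype.card ι * K * ‖x - p‖ ^ 2 := by
        simp only [Finset.sum_const, Finset.card_univ, nsmul_eq_mul]; ring
    _ ≤ Fintype.card ι * K * boxPenalty hab x := by
        gcongr
        exact sq_norm_le_sum_sq (x - p)

theorem mem_Icc_of_hasDerivAt_of_pointsInward {F : (ι → ℝ) → ι → ℝ} (hF : LocallyLipschitz F)
    (hin : PointsInwardOnIcc F a b) {u : ℝ → ι → ℝ}
    (hu : ∀ t ≥ 0, HasDerivAt u (F (u t)) t) (h0 : u 0 ∈ Icc a b) :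
    ∀ t ≥ 0, u t ∈ Icc a b := by
  intro T hT
  have hab : a ≤ b := h0.1.trans h0.2
  have hs : IsCompact (u '' Icc 0 T) :=
    isCompact_Icc.image_of_continuousOn fun t ht => (hu t ht.1).continuousAt.continuousWithinAt
  obtain ⟨K, hK⟩ := hF.locallyLipschitzOn.exists_lipschitzOnWith_of_compact
    (hs.union (hs.image (continuous_projBox hab)))
  have hφ (t : ℝ) (ht : t ∈ Icc 0 T) := (hu t ht.1).boxPenalty_comp hab
  refine mem_Icc_of_boxPenalty_nonpos (hab := hab) <|
    nonpos_of_deriv_right_le_mul_self (K := 2 * Fintype.card ι * K)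
      (fun t ht => (hφ t ht).continuousAt.continuousWithinAt)
      (fun t ht => (hφ t (Ico_subset_Icc_self ht)).hasDerivWithinAt)
      (boxPenalty_eq_zero_of_mem h0).le (fun t ht => ?_) T ⟨hT, le_rfl⟩
  have hut : u t ∈ u '' Icc 0 T := mem_image_of_mem u (Ico_subset_Icc_self ht)
  have := hin.sum_sub_projBox_mul_le hab
    (hK.dist_le_mul _ (Or.inl hut) _ (Or.inr (mem_image_of_mem _ hut)))
  simp only [mul_assoc, ← Finset.mul_sum]
  linarith

end Box

theorem contDiff_zipField (κ γ₁ γ₂ γ₃ f : ℝ) : ContDiff ℝ 1 (zipField κ γ₁ γ₂ γ₃ f) :=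
  contDiff_pi.2 fun i => by fin_cases i <;>
    simp only [zipField, Fin.zero_eta, Fin.mk_one, Fin.reduceFinMk, Matrix.cons_val] <;> fun_prop

theorem zipField_pointsInward {κ γ₁ γ₂ γ₃ f : ℝ} (hκ : 0 ≤ κ) (hγ₁ : 0 ≤ γ₁) (hγ₂ : 0 ≤ γ₂)
    (hγ₃ : 0 ≤ γ₃) (hf₀ : 0 ≤ f) (hf₁ : f ≤ 1) :
    PointsInwardOnIcc (zipField κ γ₁ γ₂ γ₃ f) 0 1 := by
  intro p ⟨hp₀, hp₁⟩ i
  have h0 (j : Fin 4) : 0 ≤ p j := hp₀ j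
  have h1 (j : Fin 4) : p j ≤ 1 := hp₁ j
  fin_cases i <;> refine ⟨fun h => ?_, fun h => ?_⟩ <;>
    simp only [Fin.zero_eta, Fin.mk_one, Fin.reduceFinMk, Pi.zero_apply, Pi.one_apply] at h <;>
    simp only [zipField, Fin.zero_eta, Fin.mk_one, Fin.reduceFinMk, Matrix.cons_val, h] <;>
    nlinarith [mul_nonneg hκ (sq_nonneg (p 2)), mul_nonneg (h0 0) hf₀,
      mul_le_mul (h1 0) hf₁ hf₀ zero_le_one, mul_nonneg hγ₁ (h0 3), mul_nonneg hγ₂ (h0 1),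
      mul_nonneg hγ₃ (h0 2)]

/-- the cube S = [0,1]⁴ is positively invariant for the ZIP
regulatory system. -/
theorem zip_cube_positively_invariant
    (κ γ₁ γ₂ γ₃ f : ℝ) (hκ : 0 < κ) (hγ₁ : 0 < γ₁) (hγ₂ : 0 < γ₂) (hγ₃ : 0 < γ₃)
    (hf : f ∈ Set.Ico (0 : ℝ) 1)
    (u : ℝ → Fin 4 → ℝ)
    (hode : ∀ t ≥ (0 : ℝ), HasDerivAt u (zipField κ γ₁ γ₂ γ₃ f (u t)) t)
    (h0 : ∀ i, u 0 i ∈ Set.Icc (0 : ℝ) 1) :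
    ∀ t ≥ (0 : ℝ), ∀ i, u t i ∈ Set.Icc (0 : ℝ) 1 := by
  intro t ht i
  have hmem := mem_Icc_of_hasDerivAt_of_pointsInward
    (contDiff_zipField κ γ₁ γ₂ γ₃ f).locallyLipschitz
    (zipField_pointsInward hκ.le hγ₁.le hγ₂.le hγ₃.le hf.1 hf.2.le) hode
    ⟨fun j => (h0 j).1, fun j => (h0 j).2⟩ t ht
  exact ⟨hmem.1 i, hmem.2 i⟩
end

section
/- For any parameters f ∈ (0,1) and κ, γ₁, γ₂, γ₃ > 0, the ZIP regulatory system has exactly one steady state in S = [0,1]⁴: there exists a unique u* ∈ [0,1]⁴ with F(u*) = 0. -/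
open Set

/- The paper's coordinates `u₁, …, u₄` are `u 0, …, u 3` here; `zipCurve κ γ₁ f c` is the
unique solution of `F₁ = F₂ = F₃ = 0` with `u₃ = c ≠ 0`, and `zipResidual` is `F₄` along it. -/
noncomputable def zipU₁ (κ c : ℝ) : ℝ := κ * c ^ 2 / (1 + κ * c ^ 2)

noncomputable def zipU₄ (γ₁ c : ℝ) : ℝ := (1 - c) / (γ₁ * c)

noncomputable def zipCurve (κ γ₁ f c : ℝ) : Fin 4 → ℝ :=
  ![zipU₁ κ c, zipU₁ κ c * f, c, zipU₄ γ₁ c]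

noncomputable def zipResidual (κ γ₁ γ₂ γ₃ f c : ℝ) : ℝ :=
  γ₂ * f * zipU₁ κ c * (1 - zipU₄ γ₁ c) - zipU₄ γ₁ c * (1 + γ₃ * c)

section

variable {κ γ₁ γ₂ γ₃ f c : ℝ}

lemma zipU₁_mem_Icc (hκ : 0 ≤ κ) : zipU₁ κ c ∈ Icc 0 1 :=
  ⟨by unfold zipU₁; positivity, div_le_one_of_le₀ (by linarith) (by positivity)⟩

lemma zipU₁_monotoneOn (hκ : 0 ≤ κ) : MonotoneOn (zipU₁ κ) (Ici 0) := by
  intro a ha b _ hab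
  unfold zipU₁
  rw [div_le_div_iff₀ (by positivity) (by positivity)]
  nlinarith [mul_le_mul hab hab ha (ha.trans hab)]

lemma zipU₄_strictAntiOn (hγ₁ : 0 < γ₁) : StrictAntiOn (zipU₄ γ₁) (Ioi 0) := by
  intro a (ha : 0 < a) b (hb : 0 < b) hab
  unfold zipU₄
  rw [div_lt_div_iff₀ (mul_pos hγ₁ hb) (mul_pos hγ₁ ha)]
  nlinarith [mul_lt_mul_of_pos_left hab hγ₁]

lemma zipU₄_inv_one_add (hγ₁ : 0 < γ₁) : zipU₄ γ₁ (1 + γ₁)⁻¹ = 1 := by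
  unfold zipU₄
  field_simp
  ring

lemma zipU₄_mem_Icc (hγ₁ : 0 < γ₁) (hc : c ∈ Icc (1 + γ₁)⁻¹ 1) : zipU₄ γ₁ c ∈ Icc 0 1 := by
  have hsub : Icc (1 + γ₁)⁻¹ 1 ⊆ Ioi 0 := fun x hx => lt_of_lt_of_le (by positivity) hx.1
  have hanti := (zipU₄_strictAntiOn hγ₁).antitoneOn.mono hsub
  refine ⟨?_, ?_⟩
  · simpa [zipU₄] using hanti hc ⟨inv_le_one_of_one_le₀ (by linarith), le_rfl⟩ hc.2
  · simpa [zipU₄_inv_one_add hγ₁] using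
      hanti ⟨le_rfl, inv_le_one_of_one_le₀ (by linarith)⟩ hc hc.1

lemma zipU₄_mul_strictAntiOn (hγ₁ : 0 < γ₁) (hγ₃ : 0 ≤ γ₃) :
    StrictAntiOn (fun c => zipU₄ γ₁ c * (1 + γ₃ * c)) (Ioi 0) := by
  intro a (ha : 0 < a) b (hb : 0 < b) hab
  simp only [zipU₄, div_mul_eq_mul_div]
  rw [div_lt_div_iff₀ (mul_pos hγ₁ hb) (mul_pos hγ₁ ha)]
  have : 0 < 1 + γ₃ * a * b := by have := mul_pos ha hb; positivity
  nlinarith [mul_pos (mul_pos hγ₁ (sub_pos.2 hab)) this]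

lemma zipResidual_strictMonoOn (hκ : 0 ≤ κ) (hγ₁ : 0 < γ₁) (hγ₂f : 0 ≤ γ₂ * f)
    (hγ₃ : 0 ≤ γ₃) : StrictMonoOn (zipResidual κ γ₁ γ₂ γ₃ f) (Icc (1 + γ₁)⁻¹ 1) := by
  intro a ha b hb hab
  have ha₀ : 0 < a := lt_of_lt_of_le (by positivity) ha.1
  have hb₀ : 0 < b := ha₀.trans hab
  have hprod : zipU₁ κ a * (1 - zipU₄ γ₁ a) ≤ zipU₁ κ b * (1 - zipU₄ γ₁ b) :=
    mul_le_mul (zipU₁_monotoneOn hκ ha₀.le hb₀.le hab.le)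
      (sub_le_sub_left ((zipU₄_strictAntiOn hγ₁ ha₀ hb₀ hab).le) 1)
      (sub_nonneg.2 (zipU₄_mem_Icc hγ₁ ha).2) (zipU₁_mem_Icc hκ).1
  have hdec := zipU₄_mul_strictAntiOn hγ₁ hγ₃ ha₀ hb₀ hab
  simp only [zipResidual]
  nlinarith [mul_le_mul_of_nonneg_left hprod hγ₂f]

lemma exists_zipResidual_eq_zero (hκ : 0 ≤ κ) (hγ₁ : 0 < γ₁) (hγ₂f : 0 ≤ γ₂ * f)
    (hγ₃ : 0 ≤ γ₃) : ∃ c ∈ Icc (1 + γ₁)⁻¹ 1, zipResidual κ γ₁ γ₂ γ₃ f c = 0 := by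
  have hcont : ContinuousOn (zipResidual κ γ₁ γ₂ γ₃ f) (Icc (1 + γ₁)⁻¹ 1) := by
    intro c hc
    have hc₀ : 0 < c := lt_of_lt_of_le (by positivity) hc.1
    unfold zipResidual zipU₁ zipU₄
    fun_prop (disch := positivity)
  refine intermediate_value_Icc (inv_le_one_of_one_le₀ (by linarith)) hcont ⟨?_, ?_⟩
  · rw [zipResidual, zipU₄_inv_one_add hγ₁]
    nlinarith [mul_nonneg hγ₃ (inv_nonneg.2 (by linarith : (0:ℝ) ≤ 1 + γ₁))]
  · simp only [zipResidual, zipU₄, sub_self, zero_div, sub_zero, zero_mul]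
    nlinarith [mul_nonneg hγ₂f (zipU₁_mem_Icc (c := 1) hκ).1]

lemma zipField_zipCurve (hκ : 0 ≤ κ) (hγ₁ : γ₁ ≠ 0) (hc : c ≠ 0) :
    zipField κ γ₁ γ₂ γ₃ f (zipCurve κ γ₁ f c) = ![0, 0, 0, zipResidual κ γ₁ γ₂ γ₃ f c] := by
  have : 1 + κ * c ^ 2 ≠ 0 := by positivity
  ext i
  fin_cases i <;>
    simp only [zipField, zipCurve, zipResidual, zipU₁, zipU₄, Fin.isValue, Fin.zero_eta,
      Fin.mk_one, Fin.reduceFinMk, Matrix.cons_val, Matrix.cons_val_zero, Matrix.cons_val_one,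
      sub_self] <;>
    field_simp <;> ring

lemma zipField_zipCurve_eq_zero_iff (hκ : 0 ≤ κ) (hγ₁ : γ₁ ≠ 0) (hc : c ≠ 0) :
    zipField κ γ₁ γ₂ γ₃ f (zipCurve κ γ₁ f c) = 0 ↔ zipResidual κ γ₁ γ₂ γ₃ f c = 0 := by
  rw [zipField_zipCurve hκ hγ₁ hc]
  simp [funext_iff, Fin.forall_fin_succ]

lemma eq_zipCurve_of_zipField_eq_zero {u : Fin 4 → ℝ} (hγ₁ : γ₁ ≠ 0)
    (hu : zipField κ γ₁ γ₂ γ₃ f u = 0) (hc : u 2 ≠ 0) : u = zipCurve κ γ₁ f (u 2) := by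
  have h₀ : κ * u 2 ^ 2 * (1 - u 0) - u 0 = 0 := congrFun hu 0
  have h₁ : u 0 * f - u 1 = 0 := congrFun hu 1
  have h₂ : 1 - γ₁ * u 2 * u 3 - u 2 = 0 := congrFun hu 2
  have hden : 1 + κ * u 2 ^ 2 ≠ 0 := fun h =>
    one_ne_zero (by linear_combination (1 - u 0) * h - h₀ : (1 : ℝ) = 0)
  have hu₀ : u 0 = zipU₁ κ (u 2) := by
    rw [zipU₁, eq_div_iff hden]; linear_combination -h₀
  ext i
  fin_cases i
  · exact hu₀
  · show u 1 = zipU₁ κ (u 2) * f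
    rw [← hu₀]; linarith
  · rfl
  · show u 3 = (1 - u 2) / (γ₁ * u 2)
    rw [eq_div_iff (mul_ne_zero hγ₁ hc)]; linarith

lemma mem_Icc_of_zipField_eq_zero {u : Fin 4 → ℝ} (hγ₁ : 0 ≤ γ₁) (hu₃ : u 3 ∈ Icc 0 1)
    (hu₂ : u 2 ≤ 1) (hu : zipField κ γ₁ γ₂ γ₃ f u = 0) : u 2 ∈ Icc (1 + γ₁)⁻¹ 1 := by
  have h₂ : 1 - γ₁ * u 2 * u 3 - u 2 = 0 := congrFun hu 2
  have hpos : 0 < u 2 := by nlinarith [mul_nonneg hγ₁ hu₃.1]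
  refine ⟨?_, hu₂⟩
  rw [inv_le_iff_one_le_mul₀ (by linarith)]
  nlinarith [mul_nonneg (mul_nonneg hγ₁ hpos.le) (sub_nonneg.2 hu₃.2)]

lemma zipCurve_mem_Icc (hκ : 0 ≤ κ) (hγ₁ : 0 < γ₁) (hf : f ∈ Icc 0 1)
    (hc : c ∈ Icc (1 + γ₁)⁻¹ 1) : ∀ i, zipCurve κ γ₁ f c i ∈ Icc 0 1 := by
  intro i
  fin_cases i
  · exact zipU₁_mem_Icc hκ
  · exact unitInterval.mul_mem (zipU₁_mem_Icc hκ) hf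
  · exact ⟨(inv_nonneg.2 (by linarith)).trans hc.1, hc.2⟩
  · exact zipU₄_mem_Icc hγ₁ hc

end

/-- the ZIP regulatory system has exactly one steady state in
the cube S = [0,1]⁴. -/
theorem zip_unique_steady_state
    (κ γ₁ γ₂ γ₃ f : ℝ) (hκ : 0 < κ) (hγ₁ : 0 < γ₁) (hγ₂ : 0 < γ₂) (hγ₃ : 0 < γ₃)
    (hf : f ∈ Set.Ioo (0 : ℝ) 1) :
    ∃! u : Fin 4 → ℝ, (∀ i, u i ∈ Set.Icc (0 : ℝ) 1) ∧ zipField κ γ₁ γ₂ γ₃ f u = 0 := by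
  have hγ₂f : 0 ≤ γ₂ * f := mul_nonneg hγ₂.le hf.1.le
  have hne : ∀ c ∈ Icc (1 + γ₁)⁻¹ 1, c ≠ 0 := fun c hc =>
    (lt_of_lt_of_le (by positivity) hc.1).ne'
  obtain ⟨c, hc, hc₀⟩ := exists_zipResidual_eq_zero hκ.le hγ₁ hγ₂f hγ₃.le
  refine ⟨zipCurve κ γ₁ f c, ⟨zipCurve_mem_Icc hκ.le hγ₁ (Ioo_subset_Icc_self hf) hc,
    (zipField_zipCurve_eq_zero_iff hκ.le hγ₁.ne' (hne c hc)).2 hc₀⟩, ?_⟩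
  rintro u ⟨hu, hF⟩
  have hu₂ := mem_Icc_of_zipField_eq_zero hγ₁.le (hu 3) (hu 2).2 hF
  have hcurve := eq_zipCurve_of_zipField_eq_zero hγ₁.ne' hF (hne _ hu₂)
  have hres : zipResidual κ γ₁ γ₂ γ₃ f (u 2) = 0 :=
    (zipField_zipCurve_eq_zero_iff hκ.le hγ₁.ne' (hne _ hu₂)).1 (hcurve ▸ hF)
  rw [hcurve, (zipResidual_strictMonoOn hκ.le hγ₁ hγ₂f hγ₃.le).injOn hu₂ hc (hres.trans hc₀.symm)]
end

section
/- For any parameters f ∈ (0,1) and κ, γ₁, γ₂, γ₃ > 0, the ZIP regulatory system has at least one steady state in the open cube (0,1)⁴: there exists u* with 0 < uᵢ* < 1 for i = 1,2,3,4 and F(u*) = 0. -/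
open Set

section Saturation

variable {K : Type*} [Field K] [LinearOrder K] [IsStrictOrderedRing K]

theorem inv_one_add_mem_Ioo {t : K} (ht : 0 < t) : (1 + t)⁻¹ ∈ Ioo (0 : K) 1 :=
  ⟨by positivity, inv_lt_one_of_one_lt₀ (lt_add_of_pos_right 1 ht)⟩

theorem div_one_add_mem_Ioo {s : K} (hs : 0 < s) : s / (1 + s) ∈ Ioo (0 : K) 1 :=
  ⟨by positivity, (div_lt_one (by positivity)).2 (lt_one_add s)⟩

end Saturation

noncomputable def zipBranch (κ γ₁ f x : ℝ) : Fin 4 → ℝ :=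
  let s := (1 + γ₁ * x)⁻¹
  let r := κ * s ^ 2 / (1 + κ * s ^ 2)
  ![r, f * r, s, x]

section Branch

variable {κ γ₁ γ₂ γ₃ f : ℝ}

theorem zipField_zipBranch_eq_zero_iff {x : ℝ} (hκ : 0 ≤ κ) (hx : 1 + γ₁ * x ≠ 0) :
    zipField κ γ₁ γ₂ γ₃ f (zipBranch κ γ₁ f x) = 0 ↔
      zipField κ γ₁ γ₂ γ₃ f (zipBranch κ γ₁ f x) 3 = 0 := by
  have hden : 1 + κ * (1 + γ₁ * x)⁻¹ ^ 2 ≠ 0 := by positivity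
  refine ⟨fun h => by rw [h]; rfl, fun h => ?_⟩
  ext i
  fin_cases i
  all_goals first
    | exact h
    | simp only [zipField, zipBranch, Fin.zero_eta, Fin.mk_one, Fin.reduceFinMk, Matrix.cons_val,
        Pi.zero_apply]
      field_simp
      ring

theorem zipBranch_mem_Ioo {x : ℝ} (hκ : 0 < κ) (hγ₁ : 0 < γ₁) (hf : f ∈ Ioo 0 1)
    (hx : x ∈ Ioo 0 1) (i : Fin 4) : zipBranch κ γ₁ f x i ∈ Ioo 0 1 := by
  have hs := inv_one_add_mem_Ioo (mul_pos hγ₁ hx.1)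
  have hr := div_one_add_mem_Ioo (mul_pos hκ (pow_pos hs.1 2))
  fin_cases i
  · exact hr
  · exact ⟨mul_pos hf.1 hr.1, mul_lt_one_of_nonneg_of_lt_one_left hf.1.le hf.2 hr.2.le⟩
  · exact hs
  · exact hx

theorem continuousOn_zipField_zipBranch_three (hκ : 0 ≤ κ) (hγ₁ : 0 ≤ γ₁) :
    ContinuousOn (fun x => zipField κ γ₁ γ₂ γ₃ f (zipBranch κ γ₁ f x) 3) (Ici 0) := by
  have hs : ContinuousOn (fun x : ℝ => (1 + γ₁ * x)⁻¹) (Ici 0) :=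
    ContinuousOn.inv₀ (by fun_prop) fun x (hx : 0 ≤ x) => by positivity
  have hr : ContinuousOn
      (fun x : ℝ => κ * (1 + γ₁ * x)⁻¹ ^ 2 / (1 + κ * (1 + γ₁ * x)⁻¹ ^ 2)) (Ici 0) := by
    fun_prop (disch := intros; positivity)
  dsimp only [zipField, zipBranch]
  simp only [Matrix.cons_val]
  fun_prop

theorem zipField_zipBranch_zero_three_pos (hκ : 0 < κ) (hγ₂ : 0 < γ₂) (hf : 0 < f) :
    0 < zipField κ γ₁ γ₂ γ₃ f (zipBranch κ γ₁ f 0) 3 := by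
  have : 0 < γ₂ * (f * (κ / (1 + κ))) := by positivity
  simpa [zipField, zipBranch] using this

theorem zipField_zipBranch_one_three_neg (hγ₁ : 0 ≤ γ₁) (hγ₃ : 0 < γ₃) :
    zipField κ γ₁ γ₂ γ₃ f (zipBranch κ γ₁ f 1) 3 < 0 := by
  have : 0 < γ₃ * (1 + γ₁)⁻¹ := by positivity
  simp only [zipField, zipBranch, Matrix.cons_val, mul_one]
  linarith

end Branch

/-- the ZIP regulatory system has at least one steady state in
the open cube (0,1)⁴. -/
theorem zip_steady_state_exists_interior
    (κ γ₁ γ₂ γ₃ f : ℝ) (hκ : 0 < κ) (hγ₁ : 0 < γ₁) (hγ₂ : 0 < γ₂) (hγ₃ : 0 < γ₃)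
    (hf : f ∈ Set.Ioo (0 : ℝ) 1) :
    ∃ u : Fin 4 → ℝ, (∀ i, u i ∈ Set.Ioo (0 : ℝ) 1) ∧ zipField κ γ₁ γ₂ γ₃ f u = 0 := by
  have hcont : ContinuousOn (fun x => zipField κ γ₁ γ₂ γ₃ f (zipBranch κ γ₁ f x) 3) (Icc 0 1) :=
    (continuousOn_zipField_zipBranch_three hκ.le hγ₁.le).mono Icc_subset_Ici_self
  obtain ⟨x, hx, hx₃⟩ := intermediate_value_Ioo' zero_le_one hcont
    ⟨zipField_zipBranch_one_three_neg hγ₁.le hγ₃, zipField_zipBranch_zero_three_pos hκ hγ₂ hf.1⟩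
  have hx₁ : 1 + γ₁ * x ≠ 0 := (add_pos one_pos (mul_pos hγ₁ hx.1)).ne'
  exact ⟨zipBranch κ γ₁ f x, zipBranch_mem_Ioo hκ hγ₁ hf hx,
    (zipField_zipBranch_eq_zero_iff hκ.le hx₁).2 hx₃⟩
end

section
/- For any parameters f ∈ (0,1) and κ, γ₁, γ₂, γ₃ > 0, the ZIP regulatory system has no steady state on the boundary of the cube S = [0,1]⁴: every u* ∈ [0,1]⁴ with F(u*) = 0 satisfies 0 < uᵢ* < 1 for i = 1,2,3,4. -/
open Set

lemma mem_Ioo_zero_one_of_mul_eq {K : Type*} [Field K] [LinearOrder K] [IsStrictOrderedRing K]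
    {x a b : K} (ha : 0 < a) (hab : a < b) (h : x * b = a) : x ∈ Ioo 0 1 := by
  have hb : 0 < b := ha.trans hab
  rw [eq_div_of_mul_eq hb.ne' h]
  exact ⟨div_pos ha hb, (div_lt_one hb).2 hab⟩

lemma zipField_eq_zero_iff (κ γ₁ γ₂ γ₃ f : ℝ) (u : Fin 4 → ℝ) :
    zipField κ γ₁ γ₂ γ₃ f u = 0 ↔
      u 0 * (1 + κ * u 2 ^ 2) = κ * u 2 ^ 2 ∧ u 1 = u 0 * f ∧ u 2 * (1 + γ₁ * u 3) = 1 ∧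
        u 3 * (1 + γ₂ * u 1 + γ₃ * u 2) = γ₂ * u 1 := by
  simp only [funext_iff, Fin.forall_fin_succ, IsEmpty.forall_iff, zipField, Pi.zero_apply,
    Fin.isValue, Matrix.cons_val_zero, Fin.succ_zero_eq_one, Matrix.cons_val_one,
    Fin.succ_one_eq_two, Matrix.cons_val, Fin.reduceSucc, and_true]
  constructor <;> rintro ⟨h₀, h₁, h₂, h₃⟩ <;> refine ⟨?_, ?_, ?_, ?_⟩ <;> linarith

/-- the ZIP regulatory system has no steady state on the boundary
of the cube S = [0,1]⁴: every steady state in S lies in the open cube (0,1)⁴. -/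
theorem zip_no_boundary_steady_state
    (κ γ₁ γ₂ γ₃ f : ℝ) (hκ : 0 < κ) (hγ₁ : 0 < γ₁) (hγ₂ : 0 < γ₂) (hγ₃ : 0 < γ₃)
    (hf : f ∈ Set.Ioo (0 : ℝ) 1)
    (u : Fin 4 → ℝ) (hu : ∀ i, u i ∈ Set.Icc (0 : ℝ) 1)
    (hsteady : zipField κ γ₁ γ₂ γ₃ f u = 0) :
    ∀ i, u i ∈ Set.Ioo (0 : ℝ) 1 := by
  obtain ⟨h₀, h₁, h₂, h₃⟩ := (zipField_eq_zero_iff κ γ₁ γ₂ γ₃ f u).1 hsteady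
  have hu₂ : u 2 ≠ 0 := left_ne_zero_of_mul_eq_one h₂
  have hu₀ : u 0 ∈ Ioo 0 1 := mem_Ioo_zero_one_of_mul_eq (by positivity) (by linarith) h₀
  have hu₁ : u 1 ∈ Ioo 0 1 := h₁ ▸ (⟨_, hu₀⟩ * ⟨_, hf⟩ : Ioo (0 : ℝ) 1).2
  have hu₃ : u 3 ∈ Ioo 0 1 := mem_Ioo_zero_one_of_mul_eq (mul_pos hγ₂ hu₁.1)
    (by nlinarith [(hu 2).1]) h₃
  have hu₂' : u 2 ∈ Ioo 0 1 := mem_Ioo_zero_one_of_mul_eq one_pos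
    (by nlinarith [hu₃.1]) h₂
  intro i
  fin_cases i <;> assumption
end

section
/- Let f ∈ (0,1) and κ, γ₁, γ₂, γ₃ > 0, and let x ∈ S₃ = (1/(1+γ₁), 1) be a root of the polynomial φ, i.e. φ(x) = 0. Then the point u* defined by u₃* = x, u₁* = κ·x²/(1+κ·x²), u₂* = f·κ·x²/(1+κ·x²), u₄* = (1−x)/(γ₁·x) satisfies F(u*) = 0 and lies in the open cube (0,1)⁴; i.e. every root of φ in S₃ yields a steady state of the ZIP regulatory system in the interior of [0,1]⁴. -/
/-- The quartic polynomial φ whose roots in S₃ correspond to steady states. -/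
noncomputable def zipPhi (κ γ₁ γ₂ γ₃ f : ℝ) (x : ℝ) : ℝ :=
  γ₃ * κ * x ^ 4 + (f * γ₂ * (1 + γ₁) + 1 - γ₃) * κ * x ^ 3 +
    (γ₃ - κ - f * γ₂ * κ) * x ^ 2 + (1 - γ₃) * x - 1

/-!
A direct computation: the first three steady-state equations are solved by the given
`u₁*, u₂*, u₄*` for any `x`, and clearing denominators in the fourth one,
`γ₁ x (1 + κ x²) · F₄(u*) = φ(x)`. The bounds `0 < u₄* < 1` are exactly `x ∈ S₃`.
-/

noncomputable def zipCandidate (κ γ₁ f x : ℝ) : Fin 4 → ℝ :=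
  ![κ * x ^ 2 / (1 + κ * x ^ 2), f * κ * x ^ 2 / (1 + κ * x ^ 2), x, (1 - x) / (γ₁ * x)]

theorem zipField_zipCandidate (κ γ₁ γ₂ γ₃ f x : ℝ) (hγ₁ : γ₁ ≠ 0) (hx : x ≠ 0)
    (hD : 1 + κ * x ^ 2 ≠ 0) :
    zipField κ γ₁ γ₂ γ₃ f (zipCandidate κ γ₁ f x) =
      ![0, 0, 0, zipPhi κ γ₁ γ₂ γ₃ f x / (γ₁ * x * (1 + κ * x ^ 2))] := by
  funext i
  fin_cases i <;> simp [zipField, zipCandidate, zipPhi] <;> field_simp <;> ring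

section OrderedField

variable {K : Type*} [Field K] [LinearOrder K] [IsStrictOrderedRing K]

theorem div_one_add_self_mem_Ioo {a : K} (ha : 0 < a) : a / (1 + a) ∈ Set.Ioo 0 1 :=
  ⟨by positivity, (div_lt_one (by positivity)).2 (by linarith)⟩

theorem one_sub_div_mul_mem_Ioo {γ x : K} (hγ : 0 < γ) (hx : x ∈ Set.Ioo (1 / (1 + γ)) 1) :
    (1 - x) / (γ * x) ∈ Set.Ioo 0 1 := by
  obtain ⟨hlo, hhi⟩ := hx
  have hx₀ : 0 < x := lt_trans (by positivity) hlo
  have hγx : 1 < (1 + γ) * x := by rwa [div_lt_iff₀ (by positivity), mul_comm] at hlo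
  exact ⟨div_pos (by linarith) (by positivity), (div_lt_one (by positivity)).2 (by linarith)⟩

end OrderedField

theorem zipCandidate_mem_Ioo {κ γ₁ f x : ℝ} (hκ : 0 < κ) (hγ₁ : 0 < γ₁)
    (hf : f ∈ Set.Ioo (0 : ℝ) 1) (hx : x ∈ Set.Ioo (1 / (1 + γ₁)) 1) (i : Fin 4) :
    zipCandidate κ γ₁ f x i ∈ Set.Ioo (0 : ℝ) 1 := by
  have hx₀ : 0 < x := lt_trans (by positivity) hx.1
  have hu₁ := div_one_add_self_mem_Ioo (show 0 < κ * x ^ 2 by positivity)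
  fin_cases i
  · exact hu₁
  · simpa [zipCandidate, mul_assoc, mul_div_assoc] using
      (⟨f, hf⟩ * ⟨_, hu₁⟩ : Set.Ioo (0 : ℝ) 1).2
  · exact ⟨hx₀, hx.2⟩
  · exact one_sub_div_mul_mem_Ioo hγ₁ hx

theorem zip_root_gives_steady_state_general
    (κ γ₁ γ₂ γ₃ f : ℝ) (hκ : 0 < κ) (hγ₁ : 0 < γ₁)
    (hf : f ∈ Set.Ioo (0 : ℝ) 1)
    (x : ℝ) (hx : x ∈ Set.Ioo (1 / (1 + γ₁)) 1) (hroot : zipPhi κ γ₁ γ₂ γ₃ f x = 0) :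
    zipField κ γ₁ γ₂ γ₃ f
      ![κ * x ^ 2 / (1 + κ * x ^ 2), f * κ * x ^ 2 / (1 + κ * x ^ 2), x,
        (1 - x) / (γ₁ * x)] = 0 ∧
    (∀ i, (![κ * x ^ 2 / (1 + κ * x ^ 2), f * κ * x ^ 2 / (1 + κ * x ^ 2), x,
        (1 - x) / (γ₁ * x)] : Fin 4 → ℝ) i ∈ Set.Ioo (0 : ℝ) 1) := by
  have hx₀ : 0 < x := lt_trans (by positivity) hx.1
  refine ⟨?_, zipCandidate_mem_Ioo hκ hγ₁ hf hx⟩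
  rw [← zipCandidate, zipField_zipCandidate κ γ₁ γ₂ γ₃ f x hγ₁.ne' hx₀.ne' (by positivity),
    hroot, zero_div]
  simp

/-- every root x of φ in S₃ = (1/(1+γ₁), 1) yields a steady state
of the ZIP regulatory system lying in the interior of the cube [0,1]⁴. -/
theorem zip_root_gives_steady_state
    (κ γ₁ γ₂ γ₃ f : ℝ) (hκ : 0 < κ) (hγ₁ : 0 < γ₁) (hγ₂ : 0 < γ₂) (hγ₃ : 0 < γ₃)
    (hf : f ∈ Set.Ioo (0 : ℝ) 1)
    (x : ℝ) (hx : x ∈ Set.Ioo (1 / (1 + γ₁)) 1) (hroot : zipPhi κ γ₁ γ₂ γ₃ f x = 0) :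
    zipField κ γ₁ γ₂ γ₃ f
      ![κ * x ^ 2 / (1 + κ * x ^ 2), f * κ * x ^ 2 / (1 + κ * x ^ 2), x,
        (1 - x) / (γ₁ * x)] = 0 ∧
    (∀ i, (![κ * x ^ 2 / (1 + κ * x ^ 2), f * κ * x ^ 2 / (1 + κ * x ^ 2), x,
        (1 - x) / (γ₁ * x)] : Fin 4 → ℝ) i ∈ Set.Ioo (0 : ℝ) 1) :=
  zip_root_gives_steady_state_general κ γ₁ γ₂ γ₃ f hκ hγ₁ hf x hx hroot
end

section
/- For any parameters f ∈ (0,1) and κ, γ₁, γ₂, γ₃ > 0, the polynomial φ(x) = γ₃·κ·x⁴ + (f·γ₂·(1+γ₁) + 1 − γ₃)·κ·x³ + (γ₃ − κ − f·γ₂·κ)·x² + (1−γ₃)·x − 1 has exactly one real root in the open interval (1/(1+γ₁), 1). -/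
open Set

theorem StrictAntiOn.mul_of_nonneg {α M₀ : Type*} [MulZeroClass M₀] [Preorder M₀]
    [PosMulStrictMono M₀] [MulPosMono M₀] [Preorder α] {f g : α → M₀} {s : Set α}
    (hf : StrictAntiOn f s) (hg : StrictAntiOn g s) (hf₀ : ∀ x ∈ s, 0 ≤ f x)
    (hg₀ : ∀ x ∈ s, 0 ≤ g x) : StrictAntiOn (f * g) s :=
  fun _ hx _ hy h ↦ mul_lt_mul'' (hf hx hy h) (hg hx hy h) (hf₀ _ hy) (hg₀ _ hy)

theorem strictAntiOn_add_inv_sq (κ : ℝ) : StrictAntiOn (fun x : ℝ ↦ κ + (x ^ 2)⁻¹) (Ioi 0) :=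
  fun x (hx : 0 < x) y _ hxy ↦ by dsimp only; gcongr

theorem strictAntiOn_div_linear {p q r s : ℝ} (hr : 0 < r) (hdet : 0 < p * s + q * r) :
    StrictAntiOn (fun x ↦ (p * x + q) / (r * x - s)) (Ioi (s / r)) := fun x hx y hy hxy ↦ by
  have hx : 0 < r * x - s := by rw [mem_Ioi, div_lt_iff₀ hr] at hx; linarith
  have hy : 0 < r * y - s := by rw [mem_Ioi, div_lt_iff₀ hr] at hy; linarith
  rw [div_lt_div_iff₀ hy hx]
  nlinarith [mul_pos hdet (sub_pos.2 hxy)]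

lemma sub_one_pos_of_one_div_lt {r x : ℝ} (hr : 0 < r) (hx : 1 / r < x) : 0 < r * x - 1 := by
  rw [div_lt_iff₀ hr] at hx; linarith

lemma one_div_one_add_lt_one {a : ℝ} (ha : 0 < a) : 1 / (1 + a) < 1 := by
  simpa using one_div_lt_one_div_of_lt one_pos (lt_add_of_pos_right 1 ha)

section ZIP

variable {κ γ₁ γ₂ γ₃ f : ℝ}

theorem zipPhi_eq (κ γ₁ γ₂ γ₃ f x : ℝ) :
    zipPhi κ γ₁ γ₂ γ₃ f x =
      f * γ₂ * κ * (x ^ 2 * ((1 + γ₁) * x - 1)) - (κ * x ^ 2 + 1) * (1 - x) * (γ₃ * x + 1) := by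
  unfold zipPhi; ring

noncomputable def zipRatio (κ γ₁ γ₃ x : ℝ) : ℝ :=
  (κ + (x ^ 2)⁻¹) * (1 - x) * ((γ₃ * x + 1) / ((1 + γ₁) * x - 1))

theorem zipPhi_eq_zero_iff (hγ₁ : 0 < 1 + γ₁) {x : ℝ} (hx : 1 / (1 + γ₁) < x) :
    zipPhi κ γ₁ γ₂ γ₃ f x = 0 ↔ zipRatio κ γ₁ γ₃ x = f * γ₂ * κ := by
  have hx₀ : x ≠ 0 := (lt_trans (by positivity) hx).ne'
  have hd := (sub_one_pos_of_one_div_lt hγ₁ hx).ne'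
  have hratio : zipRatio κ γ₁ γ₃ x * (x ^ 2 * ((1 + γ₁) * x - 1)) =
      (κ * x ^ 2 + 1) * (1 - x) * (γ₃ * x + 1) := by
    rw [zipRatio]
    -- `field_simp` writes the denominator as `x * (1 + γ₁) - 1`
    rw [mul_comm (1 + γ₁) x] at hd ⊢
    field_simp
  rw [zipPhi_eq, sub_eq_zero, ← hratio, eq_comm]
  exact mul_left_inj' (by positivity)

theorem zipRatio_strictAntiOn (hκ : 0 ≤ κ) (hγ₁ : 0 < γ₁) (hγ₃ : 0 ≤ γ₃) :
    StrictAntiOn (zipRatio κ γ₁ γ₃) (Ioo (1 / (1 + γ₁)) 1) := by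
  have hpos : ∀ x ∈ Ioo (1 / (1 + γ₁)) 1, 0 < x := fun x hx ↦ lt_trans (by positivity) hx.1
  have hinv : ∀ x ∈ Ioo (1 / (1 + γ₁)) 1, 0 ≤ κ + (x ^ 2)⁻¹ := fun x _ ↦ by positivity
  have hsub : ∀ x ∈ Ioo (1 / (1 + γ₁)) 1, 0 ≤ 1 - x := fun x hx ↦ sub_nonneg.2 hx.2.le
  have hdiv : ∀ x ∈ Ioo (1 / (1 + γ₁)) 1, 0 ≤ (γ₃ * x + 1) / ((1 + γ₁) * x - 1) :=
    fun x hx ↦ div_nonneg (by have := hpos x hx; positivity)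
      (sub_one_pos_of_one_div_lt (by linarith) hx.1).le
  refine StrictAntiOn.mul_of_nonneg (StrictAntiOn.mul_of_nonneg ?_ ?_ hinv hsub) ?_
    (fun x hx ↦ mul_nonneg (hinv x hx) (hsub x hx)) hdiv
  · exact (strictAntiOn_add_inv_sq κ).mono fun x hx ↦ hpos x hx
  · exact fun _ _ _ _ h ↦ sub_lt_sub_left h 1
  · exact (strictAntiOn_div_linear (by linarith) (by linarith)).mono Ioo_subset_Ioi_self

theorem zipPhi_one (κ γ₁ γ₂ γ₃ f : ℝ) : zipPhi κ γ₁ γ₂ γ₃ f 1 = f * γ₂ * κ * γ₁ := by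
  rw [zipPhi_eq]; ring

theorem zipPhi_one_div_neg (hκ : 0 ≤ κ) (hγ₁ : 0 < γ₁) (hγ₃ : 0 ≤ γ₃) :
    zipPhi κ γ₁ γ₂ γ₃ f (1 / (1 + γ₁)) < 0 := by
  have hpole : (1 + γ₁) * (1 / (1 + γ₁)) - 1 = 0 := by field_simp; ring
  rw [zipPhi_eq, hpole, mul_zero, mul_zero, zero_sub, neg_lt_zero]
  have := sub_pos.2 (one_div_one_add_lt_one hγ₁)
  positivity

end ZIP

/-- φ has exactly one real root in the open interval
(1/(1+γ₁), 1). -/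
theorem zipPhi_unique_root
    (κ γ₁ γ₂ γ₃ f : ℝ) (hκ : 0 < κ) (hγ₁ : 0 < γ₁) (hγ₂ : 0 < γ₂) (hγ₃ : 0 < γ₃)
    (hf : f ∈ Set.Ioo (0 : ℝ) 1) :
    ∃! x : ℝ, x ∈ Set.Ioo (1 / (1 + γ₁)) 1 ∧ zipPhi κ γ₁ γ₂ γ₃ f x = 0 := by
  have hcont : Continuous (zipPhi κ γ₁ γ₂ γ₃ f) := by unfold zipPhi; fun_prop
  have hsign : (0 : ℝ) ∈ Ioo (zipPhi κ γ₁ γ₂ γ₃ f (1 / (1 + γ₁))) (zipPhi κ γ₁ γ₂ γ₃ f 1) := by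
    refine ⟨zipPhi_one_div_neg hκ.le hγ₁ hγ₃.le, ?_⟩
    rw [zipPhi_one]
    have := hf.1
    positivity
  obtain ⟨x, hx, hx₀⟩ :=
    intermediate_value_Ioo (one_div_one_add_lt_one hγ₁).le hcont.continuousOn hsign
  refine ⟨x, ⟨hx, hx₀⟩, fun y ⟨hy, hy₀⟩ ↦ ?_⟩
  have hone : 0 < 1 + γ₁ := by linarith
  rw [zipPhi_eq_zero_iff hone hx.1] at hx₀
  rw [zipPhi_eq_zero_iff hone hy.1] at hy₀
  exact (zipRatio_strictAntiOn hκ.le hγ₁ hγ₃.le).injOn hy hx (hy₀.trans hx₀.symm)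
end

section
/- Let f ∈ (0,1) and κ, γ₁, γ₂, γ₃ > 0, and let u* ∈ [0,1]⁴ be a steady state of the ZIP regulatory system. Then the determinant of the Jacobian matrix of F evaluated at u* is strictly positive: det J(u*) > 0. -/
/-- The Jacobian matrix of the ZIP regulatory vector field at a point u. -/
noncomputable def zipJacobian (κ γ₁ γ₂ γ₃ f : ℝ) (u : Fin 4 → ℝ) :
    Matrix (Fin 4) (Fin 4) ℝ :=
  !![-(κ * (u 2) ^ 2) - 1, 0, 2 * κ * u 2 * (1 - u 0), 0;
     f, -1, 0, 0;
     0, 0, -(γ₁ * u 3) - 1, -(γ₁ * u 2);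
     0, γ₂ * (1 - u 3), -(γ₃ * u 3), -(γ₃ * u 2) - 1 - γ₂ * u 1]

/-!
Expanding along the first row, the Jacobian at any point `u` has determinant
`(1 + κ u₂²) (1 + γ₂ u₁ + γ₃ u₂ + γ₁ u₃ + γ₁ γ₂ u₁ u₃) + 2 κ γ₁ γ₂ f u₂² (1 - u₀) (1 - u₃)`:
the two `γ₁ γ₃ u₂ u₃` contributions of the lower-right block cancel. On `[0,1]⁴` the first
summand is positive and the second nonnegative, so the determinant is positive.
-/

theorem Matrix.det_fin_four_sparse {R : Type*} [CommRing R] (a b c d e f g h p : R) :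
    (!![a, 0, b, 0; f, p, 0, 0; 0, 0, c, d; 0, e, g, h] : Matrix (Fin 4) (Fin 4) R).det =
      a * p * (c * h - d * g) - b * f * d * e := by
  rw [Matrix.det_succ_row_zero, Fin.sum_univ_four]
  simp [Matrix.det_fin_three, Fin.succAbove]
  ring

theorem zipJacobian_det_eq (κ γ₁ γ₂ γ₃ f : ℝ) (u : Fin 4 → ℝ) :
    (zipJacobian κ γ₁ γ₂ γ₃ f u).det =
      (1 + κ * u 2 ^ 2) * (1 + γ₂ * u 1 + γ₃ * u 2 + γ₁ * u 3 + γ₁ * γ₂ * u 1 * u 3) +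
        2 * κ * γ₁ * γ₂ * f * u 2 ^ 2 * (1 - u 0) * (1 - u 3) := by
  rw [zipJacobian, Matrix.det_fin_four_sparse]
  ring

theorem zip_jacobian_det_pos_general
    (κ γ₁ γ₂ γ₃ f : ℝ) (hκ : 0 < κ) (hγ₁ : 0 < γ₁) (hγ₂ : 0 < γ₂) (hγ₃ : 0 < γ₃)
    (hf : f ∈ Set.Ioo (0 : ℝ) 1)
    (u : Fin 4 → ℝ) (hu : ∀ i, u i ∈ Set.Icc (0 : ℝ) 1) :
    0 < (zipJacobian κ γ₁ γ₂ γ₃ f u).det := by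
  have hf₀ := hf.1
  have h₀ : 0 ≤ 1 - u 0 := sub_nonneg.2 (hu 0).2
  have h₃ : 0 ≤ 1 - u 3 := sub_nonneg.2 (hu 3).2
  have hu₁ := (hu 1).1
  have hu₂ := (hu 2).1
  have hu₃ := (hu 3).1
  rw [zipJacobian_det_eq]
  positivity

/-- the determinant of the Jacobian at any steady state in
[0,1]⁴ is strictly positive. -/
theorem zip_jacobian_det_pos
    (κ γ₁ γ₂ γ₃ f : ℝ) (hκ : 0 < κ) (hγ₁ : 0 < γ₁) (hγ₂ : 0 < γ₂) (hγ₃ : 0 < γ₃)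
    (hf : f ∈ Set.Ioo (0 : ℝ) 1)
    (u : Fin 4 → ℝ) (hu : ∀ i, u i ∈ Set.Icc (0 : ℝ) 1)
    (hsteady : zipField κ γ₁ γ₂ γ₃ f u = 0) :
    0 < (zipJacobian κ γ₁ γ₂ γ₃ f u).det :=
  zip_jacobian_det_pos_general κ γ₁ γ₂ γ₃ f hκ hγ₁ hγ₂ hγ₃ hf u hu
end

section
/- Let f ∈ (0,1) and κ, γ₁, γ₂, γ₃ > 0, let u* ∈ [0,1]⁴ be a steady state of the ZIP regulatory system, and set a = κ·u₃*², b = 2κ·u₃*·(1−u₁*), c = f, d = γ₁·u₄*, e = γ₁·u₃*, f̂ = γ₂·(1−u₄*), g = γ₃·u₄*, h = γ₃·u₃* + γ₂·u₂*. Then the characteristic polynomial of the Jacobian J(u*) satisfies, for all λ ∈ ℝ with λ̃ := λ + 1: det(λ·I − J(u*)) = (λ̃ + a)·λ̃·(λ̃² + (d+h)·λ̃ + (d·h − e·g)) + b·c·f̂·e, and moreover d·h − e·g = γ₁·γ₂·u₂*·u₄* ≥ 0. -/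
/-- Besides the block-diagonal terms, the only permutation avoiding the zero entries is the
4-cycle `0 → 2 → 3 → 1 → 0` through the off-block entries, which contributes `b c f e`. -/
theorem Matrix.det_fin_four_of_feedback_loop {R : Type*} [CommRing R]
    (p q r s b c e f g : R) :
    !![p, 0, -b, 0; -c, q, 0, 0; 0, 0, r, e; 0, -f, g, s].det
      = p * q * (r * s - e * g) + b * c * f * e := by
  rw [Matrix.det_succ_row_zero]
  simp [Fin.sum_univ_succ, Matrix.det_fin_three, Fin.succAbove]
  ring

theorem smul_one_sub_zipJacobian (κ γ₁ γ₂ γ₃ f lam : ℝ) (u : Fin 4 → ℝ) :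
    lam • (1 : Matrix (Fin 4) (Fin 4) ℝ) - zipJacobian κ γ₁ γ₂ γ₃ f u =
      !![(lam + 1) + κ * u 2 ^ 2, 0, -(2 * κ * u 2 * (1 - u 0)), 0;
         -f, lam + 1, 0, 0;
         0, 0, (lam + 1) + γ₁ * u 3, γ₁ * u 2;
         0, -(γ₂ * (1 - u 3)), γ₃ * u 3, (lam + 1) + (γ₃ * u 2 + γ₂ * u 1)] := by
  ext i j
  fin_cases i <;> fin_cases j <;> simp [zipJacobian] <;> ring

theorem zip_charpoly_shifted_form_general
    (κ γ₁ γ₂ γ₃ f : ℝ) (hγ₁ : 0 < γ₁) (hγ₂ : 0 < γ₂)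
    (u : Fin 4 → ℝ) (hu : ∀ i, u i ∈ Set.Icc (0 : ℝ) 1)
    (a b c d e f' g h : ℝ)
    (ha : a = κ * (u 2) ^ 2) (hb : b = 2 * κ * u 2 * (1 - u 0)) (hc : c = f)
    (hd : d = γ₁ * u 3) (he : e = γ₁ * u 2) (hf' : f' = γ₂ * (1 - u 3))
    (hg : g = γ₃ * u 3) (hh : h = γ₃ * u 2 + γ₂ * u 1) :
    (∀ lam : ℝ,
      (lam • (1 : Matrix (Fin 4) (Fin 4) ℝ) - zipJacobian κ γ₁ γ₂ γ₃ f u).det =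
        ((lam + 1) + a) * (lam + 1) *
          ((lam + 1) ^ 2 + (d + h) * (lam + 1) + (d * h - e * g)) + b * c * f' * e) ∧
    d * h - e * g = γ₁ * γ₂ * u 1 * u 3 ∧ 0 ≤ d * h - e * g := by
  subst ha hb hc hd he hf' hg hh
  have hdh : γ₁ * u 3 * (γ₃ * u 2 + γ₂ * u 1) - γ₁ * u 2 * (γ₃ * u 3)
      = γ₁ * γ₂ * u 1 * u 3 := by ring
  have hu₁ := (hu 1).1
  have hu₃ := (hu 3).1
  refine ⟨fun lam => ?_, hdh, by rw [hdh]; positivity⟩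
  rw [smul_one_sub_zipJacobian, Matrix.det_fin_four_of_feedback_loop]
  ring

/-- the characteristic polynomial of the Jacobian at a steady
state, written in the shifted variable λ̃ = λ + 1, together with the identity
d·h − e·g = γ₁·γ₂·u₂*·u₄* ≥ 0. -/
theorem zip_charpoly_shifted_form
    (κ γ₁ γ₂ γ₃ f : ℝ) (hκ : 0 < κ) (hγ₁ : 0 < γ₁) (hγ₂ : 0 < γ₂) (hγ₃ : 0 < γ₃)
    (hf : f ∈ Set.Ioo (0 : ℝ) 1)
    (u : Fin 4 → ℝ) (hu : ∀ i, u i ∈ Set.Icc (0 : ℝ) 1)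
    (hsteady : zipField κ γ₁ γ₂ γ₃ f u = 0)
    (a b c d e f' g h : ℝ)
    (ha : a = κ * (u 2) ^ 2) (hb : b = 2 * κ * u 2 * (1 - u 0)) (hc : c = f)
    (hd : d = γ₁ * u 3) (he : e = γ₁ * u 2) (hf' : f' = γ₂ * (1 - u 3))
    (hg : g = γ₃ * u 3) (hh : h = γ₃ * u 2 + γ₂ * u 1) :
    (∀ lam : ℝ,
      (lam • (1 : Matrix (Fin 4) (Fin 4) ℝ) - zipJacobian κ γ₁ γ₂ γ₃ f u).det =
        ((lam + 1) + a) * (lam + 1) *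
          ((lam + 1) ^ 2 + (d + h) * (lam + 1) + (d * h - e * g)) + b * c * f' * e) ∧
    d * h - e * g = γ₁ * γ₂ * u 1 * u 3 ∧ 0 ≤ d * h - e * g :=
  zip_charpoly_shifted_form_general κ γ₁ γ₂ γ₃ f hγ₁ hγ₂ u hu a b c d e f' g h ha hb hc hd he hf' hg
    hh
end

section
/- Let f ∈ (0,1) and κ, γ₁, γ₂, γ₃ > 0, let u* ∈ [0,1]⁴ be a steady state of the ZIP regulatory system, and let λ₁, λ₂, λ₃, λ₄ ∈ ℂ be the eigenvalues (with multiplicity) of the Jacobian J(u*) regarded as a complex matrix. Then, up to permutation, exactly one of the following holds: (1) all four λᵢ are real and satisfy λᵢ < −1; (2) λ₁, λ₂ are real with λ₁, λ₂ < −1 and λ₃ = conj(λ₄) with Im λ₃ ≠ 0; (3) λ₁ = conj(λ₂) with Im λ₁ ≠ 0 and Re λ₁ < 0, and λ₃ = conj(λ₄) with Im λ₃ ≠ 0. In particular, J(u*) cannot have two conjugate pairs of eigenvalues that both lie on the imaginary axis. -/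
open Complex Polynomial

/-- Case 1: all four eigenvalues are real and < −1. -/
def zipCase1 (μ : Fin 4 → ℂ) : Prop :=
  ∀ i, (μ i).im = 0 ∧ (μ i).re < -1

/-- Case 2: two eigenvalues are real and < −1, the other two form a
non-real conjugate pair. -/
def zipCase2 (μ : Fin 4 → ℂ) : Prop :=
  (μ 0).im = 0 ∧ (μ 0).re < -1 ∧ (μ 1).im = 0 ∧ (μ 1).re < -1 ∧
  μ 2 = starRingEnd ℂ (μ 3) ∧ (μ 2).im ≠ 0

/-- Case 3: two non-real conjugate pairs, the first with negative real part. -/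
def zipCase3 (μ : Fin 4 → ℂ) : Prop :=
  μ 0 = starRingEnd ℂ (μ 1) ∧ (μ 0).im ≠ 0 ∧ (μ 0).re < 0 ∧
  μ 2 = starRingEnd ℂ (μ 3) ∧ (μ 2).im ≠ 0

/-!
At a steady state in `[0,1]⁴` one has `u₂ > 0`, `u₀ < 1` and `u₃ < 1`, and in the variable
`y = x + 1` the characteristic polynomial of `J` is `y (y + κu₂²) (y² + b y + c) + d` with
`b, c ≥ 0` and `d = 2fκγ₁γ₂u₂²(1 - u₀)(1 - u₃) > 0`. It is therefore positive on `[-1, ∞)`, so every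
real eigenvalue is `< -1`. As `J` is real, its non-real eigenvalues come in conjugate pairs, so
there are four, two or no real eigenvalues: these are the three configurations, and the number of
real eigenvalues tells them apart. Finally `tr J < 0`, so the real parts of the eigenvalues cannot
all vanish, and when there are two conjugate pairs one of them has negative real part.
-/

open ComplexConjugate

theorem Equiv.Perm.exists_eq_comp_of_map_univ_val_eq {α β : Type*} [Fintype α] {f g : α → β}
    (h : Finset.univ.val.map f = Finset.univ.val.map g) :
    ∃ σ : Equiv.Perm α, f = g ∘ σ := by
  classical
  have hfiber (b : β) : Fintype.card {a // f a = b} = Fintype.card {a // g a = b} := by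
    have := congrArg (Multiset.count b) h
    simp only [Multiset.count_map, eq_comm (a := b)] at this
    simpa only [Fintype.card_subtype, Finset.card, Finset.filter_val] using this
  refine ⟨Equiv.ofFiberEquiv fun b => Fintype.equivOfCardEq (hfiber b), funext fun a => ?_⟩
  exact (Equiv.ofFiberEquiv_map _ a).symm

theorem Multiset.exists_eq_conj_cons_cons_of_map_conj {s : Multiset ℂ} (hs : s.map conj = s)
    {z : ℂ} (hz : z ∈ s) (him : z.im ≠ 0) :
    ∃ t : Multiset ℂ, s = conj z ::ₘ z ::ₘ t ∧ t.map conj = t := by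
  have hconj : conj z ∈ s := hs ▸ Multiset.mem_map_of_mem _ hz
  have hz' : z ∈ s.erase (conj z) :=
    (Multiset.mem_erase_of_ne fun h => him (conj_eq_iff_im.mp h.symm)).mpr hz
  refine ⟨(s.erase (conj z)).erase z, ?_, ?_⟩
  · rw [Multiset.cons_erase hz', Multiset.cons_erase hconj]
  · have hinj := (starRingEnd ℂ).injective
    rw [Multiset.map_erase _ hinj, Multiset.map_erase _ hinj, hs, conj_conj, Multiset.erase_comm]

def HoldsUpToPerm {ι α : Type*} (P : (ι → α) → Prop) (v : ι → α) : Prop :=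
  ∃ σ : Equiv.Perm ι, P (v ∘ σ)

theorem holdsUpToPerm_of_map_univ_val_eq {ι α : Type*} [Fintype ι]
    {P : (ι → α) → Prop} {v w : ι → α} (h : Finset.univ.val.map w = Finset.univ.val.map v)
    (hw : P w) : HoldsUpToPerm P v := by
  obtain ⟨σ, rfl⟩ := Equiv.Perm.exists_eq_comp_of_map_univ_val_eq h
  exact ⟨σ, hw⟩

theorem Polynomial.map_conj_roots_map_ofReal (p : ℝ[X]) :
    (p.map ofRealHom).roots.map conj = (p.map ofRealHom).roots := by
  have hsplit := IsAlgClosed.splits (p.map ofRealHom)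
  rw [roots_map_of_injective_of_card_eq_natDegree (starRingEnd ℂ).injective
    (splits_iff_card_roots.mp hsplit), Polynomial.map_map]
  congr 2
  exact RingHom.ext conj_ofReal

theorem Polynomial.isRoot_re_of_mem_roots_map_ofReal {p : ℝ[X]} {z : ℂ}
    (hz : z ∈ (p.map ofRealHom).roots) (him : z.im = 0) : p.IsRoot z.re := by
  have hroot := (mem_roots'.mp hz).2
  rw [← re_add_im z, him, ofReal_zero, zero_mul, add_zero, IsRoot, eval_map,
    ← ofRealHom_eq_coe, eval₂_at_apply, ofRealHom_eq_coe, ofReal_eq_zero] at hroot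
  exact hroot

theorem Polynomial.roots_prod_X_sub_C_map {ι R : Type*} [CommRing R] [IsDomain R]
    (s : Finset ι) (v : ι → R) :
    (∏ i ∈ s, (X - C (v i))).roots = s.val.map v := by
  rw [Finset.prod_eq_multiset_prod, ← roots_multiset_prod_X_sub_C (s.val.map v), Multiset.map_map]
  rfl

section Zip

variable {κ γ₁ γ₂ γ₃ f : ℝ} {u : Fin 4 → ℝ}

theorem zipField_steady_bounds (hκ : 0 ≤ κ) (hγ₁ : 0 ≤ γ₁) (hγ₂ : 0 ≤ γ₂) (hγ₃ : 0 ≤ γ₃)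
    (hu : 0 ≤ u) (hsteady : zipField κ γ₁ γ₂ γ₃ f u = 0) :
    0 < u 2 ∧ u 0 < 1 ∧ u 3 < 1 := by
  have e0 : κ * u 2 ^ 2 * (1 - u 0) - u 0 = 0 := congrFun hsteady 0
  have e2 : 1 - γ₁ * u 2 * u 3 - u 2 = 0 := congrFun hsteady 2
  have e3 : γ₂ * u 1 - γ₃ * u 2 * u 3 - (1 + γ₂ * u 1) * u 3 = 0 := congrFun hsteady 3
  have hu1 : 0 ≤ u 1 := hu 1
  have hu2 : 0 ≤ u 2 := hu 2
  have hu3 : 0 ≤ u 3 := hu 3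
  have hu2_pos : 0 < u 2 := by nlinarith [mul_nonneg hγ₁ hu3]
  refine ⟨hu2_pos, ?_, ?_⟩
  · nlinarith [mul_nonneg hκ (sq_nonneg (u 2))]
  · nlinarith [mul_nonneg (mul_nonneg hγ₃ hu2) hu3, mul_nonneg hγ₂ hu1]

theorem zipJacobian_charpoly_eval (x : ℝ) :
    (zipJacobian κ γ₁ γ₂ γ₃ f u).charpoly.eval x =
      (x + 1) * (x + 1 + κ * u 2 ^ 2) *
          ((x + 1) ^ 2 + (γ₁ * u 3 + γ₃ * u 2 + γ₂ * u 1) * (x + 1) + γ₁ * γ₂ * u 1 * u 3) +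
        2 * f * κ * γ₁ * γ₂ * u 2 ^ 2 * (1 - u 0) * (1 - u 3) := by
  have hsub : Matrix.scalar (Fin 4) x - zipJacobian κ γ₁ γ₂ γ₃ f u =
      !![x + κ * u 2 ^ 2 + 1, 0, -(2 * κ * u 2 * (1 - u 0)), 0;
         -f, x + 1, 0, 0;
         0, 0, x + γ₁ * u 3 + 1, γ₁ * u 2;
         0, -(γ₂ * (1 - u 3)), γ₃ * u 3, x + γ₃ * u 2 + 1 + γ₂ * u 1] := by
    ext i j
    fin_cases i <;> fin_cases j <;> simp [zipJacobian] <;> ring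
  rw [Matrix.eval_charpoly, hsub]
  eval_det
  ring

theorem zipJacobian_charpoly_eval_pos (hκ : 0 < κ) (hγ₁ : 0 < γ₁) (hγ₂ : 0 < γ₂) (hγ₃ : 0 ≤ γ₃)
    (hf : 0 < f) (hu : 0 ≤ u) (hsteady : zipField κ γ₁ γ₂ γ₃ f u = 0) {x : ℝ} (hx : -1 ≤ x) :
    0 < (zipJacobian κ γ₁ γ₂ γ₃ f u).charpoly.eval x := by
  obtain ⟨hu2, hu0_lt, hu3_lt⟩ := zipField_steady_bounds hκ.le hγ₁.le hγ₂.le hγ₃ hu hsteady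
  have hu1 : 0 ≤ u 1 := hu 1
  have hu3 : 0 ≤ u 3 := hu 3
  have hx1 : 0 ≤ x + 1 := by linarith
  have hu0_sub : 0 < 1 - u 0 := sub_pos.2 hu0_lt
  have hu3_sub : 0 < 1 - u 3 := sub_pos.2 hu3_lt
  rw [zipJacobian_charpoly_eval]
  positivity

theorem zipJacobian_trace_neg (hκ : 0 ≤ κ) (hγ₁ : 0 ≤ γ₁) (hγ₂ : 0 ≤ γ₂) (hγ₃ : 0 ≤ γ₃)
    (hu : 0 ≤ u) : (zipJacobian κ γ₁ γ₂ γ₃ f u).trace < 0 := by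
  have hu1 : 0 ≤ u 1 := hu 1
  have hu2 : 0 ≤ u 2 := hu 2
  have hu3 : 0 ≤ u 3 := hu 3
  have htrace : (zipJacobian κ γ₁ γ₂ γ₃ f u).trace =
      -4 - (κ * u 2 ^ 2 + γ₁ * u 3 + γ₃ * u 2 + γ₂ * u 1) := by
    simp only [Matrix.trace, Fin.sum_univ_four, Matrix.diag_apply, zipJacobian, Matrix.of_apply,
      Matrix.cons_val', Matrix.cons_val_fin_one, Matrix.cons_val_zero, Matrix.cons_val_one,
      Matrix.cons_val]
    ring
  have : 0 ≤ κ * u 2 ^ 2 + γ₁ * u 3 + γ₃ * u 2 + γ₂ * u 1 := by positivity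
  linarith

end Zip

section Configurations

variable {lam : Fin 4 → ℂ}

theorem im_eq_zero_of_zipCase1 (h : HoldsUpToPerm zipCase1 lam) (i : Fin 4) : (lam i).im = 0 := by
  obtain ⟨σ, hσ⟩ := h
  simpa using (hσ (σ.symm i)).1

theorem exists_im_eq_zero_of_zipCase2 (h : HoldsUpToPerm zipCase2 lam) : ∃ i, (lam i).im = 0 :=
  let ⟨σ, hσ⟩ := h
  ⟨σ 0, hσ.1⟩

theorem exists_im_ne_zero_of_zipCase2 (h : HoldsUpToPerm zipCase2 lam) : ∃ i, (lam i).im ≠ 0 :=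
  let ⟨σ, hσ⟩ := h
  ⟨σ 2, hσ.2.2.2.2.2⟩

theorem im_ne_zero_of_zipCase3 (h : HoldsUpToPerm zipCase3 lam) (i : Fin 4) : (lam i).im ≠ 0 := by
  obtain ⟨σ, h01, h0, -, h23, h2⟩ := h
  simp only [Function.comp_apply] at h01 h0 h23 h2
  have h1 : (lam (σ 1)).im ≠ 0 := by simpa [h01] using h0
  have h3 : (lam (σ 3)).im ≠ 0 := by simpa [h23] using h2
  rw [← σ.apply_symm_apply i]
  generalize σ.symm i = j
  fin_cases j
  exacts [h0, h1, h2, h3]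

theorem holdsUpToPerm_zipCase2 {z a b : ℂ}
    (hs : Finset.univ.val.map lam = conj z ::ₘ z ::ₘ {a, b}) (hz : z.im ≠ 0)
    (ha : a.im = 0 ∧ a.re < -1) (hb : b.im = 0 ∧ b.re < -1) : HoldsUpToPerm zipCase2 lam := by
  refine holdsUpToPerm_of_map_univ_val_eq (w := ![a, b, conj z, z]) ?_
    ⟨ha.1, ha.2, hb.1, hb.2, rfl, by simpa using hz⟩
  rw [hs]
  exact add_comm ({a, b} : Multiset ℂ) {conj z, z}

theorem holdsUpToPerm_zipCase3 {z w : ℂ}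
    (hs : Finset.univ.val.map lam = conj z ::ₘ z ::ₘ conj w ::ₘ w ::ₘ 0) (hz : z.im ≠ 0)
    (hw : w.im ≠ 0) (hsum : (∑ i, lam i).re < 0) : HoldsUpToPerm zipCase3 lam := by
  have hre : z.re + w.re < 0 := by
    have : (∑ i, lam i).re = 2 * (z.re + w.re) := by
      rw [Finset.sum_eq_multiset_sum, hs]
      simp only [Multiset.sum_cons, Multiset.sum_zero, add_re, conj_re, zero_re]
      ring
    linarith
  by_cases hz_re : z.re < 0
  · exact holdsUpToPerm_of_map_univ_val_eq (w := ![conj z, z, conj w, w]) hs.symm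
      ⟨rfl, by simpa using hz, by simpa using hz_re, rfl, by simpa using hw⟩
  · refine holdsUpToPerm_of_map_univ_val_eq (w := ![conj w, w, conj z, z]) ?_
      ⟨rfl, by simpa using hw, (conj_re w).trans_lt (by linarith), rfl, by simpa using hz⟩
    rw [hs]
    exact add_comm ({conj w, w} : Multiset ℂ) {conj z, z}

variable (hconj : (Finset.univ.val.map lam).map conj = Finset.univ.val.map lam)
  (hreal : ∀ z ∈ Finset.univ.val.map lam, z.im = 0 → z.re < -1) (hsum : (∑ i, lam i).re < 0)
include hconj hreal hsum

theorem zipCase_exhaustive :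
    HoldsUpToPerm zipCase1 lam ∨ HoldsUpToPerm zipCase2 lam ∨ HoldsUpToPerm zipCase3 lam := by
  have hmem (i : Fin 4) : lam i ∈ Finset.univ.val.map lam :=
    Multiset.mem_map_of_mem _ (Finset.mem_univ i)
  by_cases hall : ∀ i, (lam i).im = 0
  · exact Or.inl ⟨1, fun i => ⟨hall i, hreal _ (hmem i) (hall i)⟩⟩
  push Not at hall
  obtain ⟨i, hi⟩ := hall
  obtain ⟨t, hs, ht⟩ := Multiset.exists_eq_conj_cons_cons_of_map_conj hconj (hmem i) hi
  have hcard : Multiset.card t = 2 := by simpa using congrArg Multiset.card hs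
  by_cases ht_real : ∀ w ∈ t, w.im = 0
  · obtain ⟨a, b, rfl⟩ := Multiset.card_eq_two.mp hcard
    have hreal' (w : ℂ) (hw : w ∈ ({a, b} : Multiset ℂ)) : w.im = 0 ∧ w.re < -1 :=
      ⟨ht_real w hw,
        hreal w (hs ▸ Multiset.mem_cons_of_mem (Multiset.mem_cons_of_mem hw)) (ht_real w hw)⟩
    exact Or.inr (Or.inl (holdsUpToPerm_zipCase2 hs hi (hreal' a (by simp)) (hreal' b (by simp))))
  push Not at ht_real
  obtain ⟨w, hw, hw_im⟩ := ht_real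
  obtain ⟨r, rfl, -⟩ := Multiset.exists_eq_conj_cons_cons_of_map_conj ht hw hw_im
  obtain rfl : r = 0 := by simpa using hcard
  exact Or.inr (Or.inr (holdsUpToPerm_zipCase3 hs hi hw_im hsum))

theorem zipCase_trichotomy :
    (HoldsUpToPerm zipCase1 lam ∧ ¬HoldsUpToPerm zipCase2 lam ∧ ¬HoldsUpToPerm zipCase3 lam) ∨
      (¬HoldsUpToPerm zipCase1 lam ∧ HoldsUpToPerm zipCase2 lam ∧ ¬HoldsUpToPerm zipCase3 lam) ∨
      (¬HoldsUpToPerm zipCase1 lam ∧ ¬HoldsUpToPerm zipCase2 lam ∧ HoldsUpToPerm zipCase3 lam) := by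
  have not_12 (h1 : HoldsUpToPerm zipCase1 lam) (h2 : HoldsUpToPerm zipCase2 lam) : False :=
    let ⟨i, hi⟩ := exists_im_ne_zero_of_zipCase2 h2
    hi (im_eq_zero_of_zipCase1 h1 i)
  have not_13 (h1 : HoldsUpToPerm zipCase1 lam) (h3 : HoldsUpToPerm zipCase3 lam) : False :=
    im_ne_zero_of_zipCase3 h3 0 (im_eq_zero_of_zipCase1 h1 0)
  have not_23 (h2 : HoldsUpToPerm zipCase2 lam) (h3 : HoldsUpToPerm zipCase3 lam) : False :=
    let ⟨i, hi⟩ := exists_im_eq_zero_of_zipCase2 h2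
    im_ne_zero_of_zipCase3 h3 i hi
  have := zipCase_exhaustive hconj hreal hsum
  tauto

end Configurations

theorem not_two_imaginary_conj_pairs {lam : Fin 4 → ℂ} (hsum : (∑ i, lam i).re < 0) :
    ¬∃ σ : Equiv.Perm (Fin 4),
        lam (σ 0) = conj (lam (σ 1)) ∧ (lam (σ 0)).im ≠ 0 ∧ (lam (σ 0)).re = 0 ∧
        lam (σ 2) = conj (lam (σ 3)) ∧ (lam (σ 2)).im ≠ 0 ∧ (lam (σ 2)).re = 0 := by
  rintro ⟨σ, h01, -, h0, h23, -, h2⟩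
  have h1 : (lam (σ 1)).re = 0 := by simpa [h01] using h0
  have h3 : (lam (σ 3)).re = 0 := by simpa [h23] using h2
  rw [← Equiv.sum_comp σ, Fin.sum_univ_four] at hsum
  simp only [add_re, h0, h1, h2, h3] at hsum
  norm_num at hsum

/-- up to permutation, the eigenvalues of the Jacobian at a
steady state fall into exactly one of three configurations; in particular
the Jacobian cannot have two conjugate pairs of eigenvalues both lying on the
imaginary axis. -/
theorem zip_eigenvalue_configurations
    (κ γ₁ γ₂ γ₃ f : ℝ) (hκ : 0 < κ) (hγ₁ : 0 < γ₁) (hγ₂ : 0 < γ₂) (hγ₃ : 0 < γ₃)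
    (hf : f ∈ Set.Ioo (0 : ℝ) 1)
    (u : Fin 4 → ℝ) (hu : ∀ i, u i ∈ Set.Icc (0 : ℝ) 1)
    (hsteady : zipField κ γ₁ γ₂ γ₃ f u = 0)
    (lam : Fin 4 → ℂ)
    (heig : ((zipJacobian κ γ₁ γ₂ γ₃ f u).map (Complex.ofReal)).charpoly =
      ∏ i : Fin 4, (X - C (lam i))) :
    (((∃ σ : Equiv.Perm (Fin 4), zipCase1 (lam ∘ σ)) ∧
        ¬(∃ σ : Equiv.Perm (Fin 4), zipCase2 (lam ∘ σ)) ∧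
        ¬(∃ σ : Equiv.Perm (Fin 4), zipCase3 (lam ∘ σ))) ∨
      (¬(∃ σ : Equiv.Perm (Fin 4), zipCase1 (lam ∘ σ)) ∧
        (∃ σ : Equiv.Perm (Fin 4), zipCase2 (lam ∘ σ)) ∧
        ¬(∃ σ : Equiv.Perm (Fin 4), zipCase3 (lam ∘ σ))) ∨
      (¬(∃ σ : Equiv.Perm (Fin 4), zipCase1 (lam ∘ σ)) ∧
        ¬(∃ σ : Equiv.Perm (Fin 4), zipCase2 (lam ∘ σ)) ∧
        (∃ σ : Equiv.Perm (Fin 4), zipCase3 (lam ∘ σ)))) ∧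
    ¬(∃ σ : Equiv.Perm (Fin 4),
        lam (σ 0) = starRingEnd ℂ (lam (σ 1)) ∧ (lam (σ 0)).im ≠ 0 ∧
        (lam (σ 0)).re = 0 ∧
        lam (σ 2) = starRingEnd ℂ (lam (σ 3)) ∧ (lam (σ 2)).im ≠ 0 ∧
        (lam (σ 2)).re = 0) := by
  set J := zipJacobian κ γ₁ γ₂ γ₃ f u
  have hchar : (J.map ofReal).charpoly = J.charpoly.map ofRealHom := J.charpoly_map ofRealHom
  have hroots : (J.charpoly.map ofRealHom).roots = Finset.univ.val.map lam := by
    rw [← hchar, heig, roots_prod_X_sub_C_map]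
  have hconj : (Finset.univ.val.map lam).map conj = Finset.univ.val.map lam := by
    rw [← hroots]
    exact J.charpoly.map_conj_roots_map_ofReal
  have hreal : ∀ z ∈ Finset.univ.val.map lam, z.im = 0 → z.re < -1 := by
    intro z hz him
    rw [← hroots] at hz
    by_contra! hz_re
    exact (zipJacobian_charpoly_eval_pos hκ hγ₁ hγ₂ hγ₃.le hf.1 (fun i => (hu i).1) hsteady
      hz_re).ne' (isRoot_re_of_mem_roots_map_ofReal hz him)
  have hsum : (∑ i, lam i).re < 0 := by
    have htrace : ∑ i, lam i = J.trace := by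
      rw [Finset.sum_eq_multiset_sum, ← hroots, ← hchar, ← Matrix.trace_eq_sum_roots_charpoly]
      simp [Matrix.trace]
    rw [htrace, ofReal_re]
    exact zipJacobian_trace_neg hκ.le hγ₁.le hγ₂.le hγ₃.le fun i => (hu i).1
  exact ⟨zipCase_trichotomy hconj hreal hsum, not_two_imaginary_conj_pairs hsum⟩
end

section
/- Let κ, γ₁, γ₂, γ₃ > 0 and take f = 0 (external zinc concentration μ = 0). Then u* = (κ/(1+κ), 0, 1, 0) is a steady state of the ZIP regulatory system, and the characteristic polynomial of the Jacobian J(u*) equals (X+1)²·(X+κ+1)·(X+γ₃+1); in particular the eigenvalues of J(u*) are −1 (with multiplicity two), −κ−1, and −γ₃−1. -/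
open Polynomial

/-! At `f = 0` the Jacobian at `u* = (κ/(1+κ), 0, 1, 0)` becomes upper triangular once the
coordinates are reordered as `(u₁, u₃, u₄, u₂)`, so its characteristic polynomial is the product
of `X - d` over its diagonal entries `d = -κ-1, -1, -1, -γ₃-1`. -/

namespace Matrix

variable {n R α : Type*} [Fintype n] [DecidableEq n] [CommRing R] [LinearOrder α]

theorem BlockTriangular.charpoly_of_injective {M : Matrix n n R} {b : n → α}
    (hM : M.BlockTriangular b) (hb : b.Injective) :
    M.charpoly = ∏ i, (X - C (M i i)) :=
  letI := LinearOrder.lift' b hb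
  charpoly_of_isUpperTriangular M hM

theorem det_smul_one_sub (M : Matrix n n R) (t : R) :
    (t • (1 : Matrix n n R) - M).det = M.charpoly.eval t := by
  rw [eval_charpoly, smul_one_eq_diagonal, scalar_apply]

end Matrix

theorem zipField_eq_zero_of_zero_zinc {κ : ℝ} (hκ : 1 + κ ≠ 0) (γ₁ γ₂ γ₃ : ℝ) :
    zipField κ γ₁ γ₂ γ₃ 0 ![κ / (1 + κ), 0, 1, 0] = 0 := by
  have hbalance : κ * (1 - κ / (1 + κ)) = κ / (1 + κ) := by
    field_simp
    ring
  ext i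
  fin_cases i <;> simp [zipField, hbalance]

theorem zipJacobian_blockTriangular (κ γ₁ γ₂ γ₃ a : ℝ) :
    (zipJacobian κ γ₁ γ₂ γ₃ 0 ![a, 0, 1, 0]).BlockTriangular ![(0 : ℕ), 3, 1, 2] := by
  intro i j hij
  fin_cases i <;> fin_cases j <;> simp_all [zipJacobian]

theorem zipJacobian_charpoly (κ γ₁ γ₂ γ₃ a : ℝ) :
    (zipJacobian κ γ₁ γ₂ γ₃ 0 ![a, 0, 1, 0]).charpoly =
      (X + 1) ^ 2 * (X + C (κ + 1)) * (X + C (γ₃ + 1)) := by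
  rw [(zipJacobian_blockTriangular κ γ₁ γ₂ γ₃ a).charpoly_of_injective (by decide),
    Fin.prod_univ_four]
  simp only [zipJacobian, Matrix.of_apply, Matrix.cons_val', Matrix.cons_val, Matrix.cons_val_zero,
    Matrix.cons_val_one, Matrix.cons_val_fin_one, one_pow, mul_one, mul_zero, neg_zero, zero_sub,
    sub_zero, map_sub, map_neg, map_one, map_add, sub_neg_eq_add]
  ring

theorem zip_eigenvalues_at_zero_zinc_general
    (κ γ₁ γ₂ γ₃ : ℝ) (hκ : 0 < κ) :
    zipField κ γ₁ γ₂ γ₃ 0 ![κ / (1 + κ), 0, 1, 0] = 0 ∧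
    (zipJacobian κ γ₁ γ₂ γ₃ 0 ![κ / (1 + κ), 0, 1, 0]).charpoly =
      (X + 1) ^ 2 * (X + C (κ + 1)) * (X + C (γ₃ + 1)) ∧
    (∀ lam : ℝ,
      (lam • (1 : Matrix (Fin 4) (Fin 4) ℝ) -
        zipJacobian κ γ₁ γ₂ γ₃ 0 ![κ / (1 + κ), 0, 1, 0]).det = 0 ↔
      (lam = -1 ∨ lam = -κ - 1 ∨ lam = -γ₃ - 1)) := by
  refine ⟨zipField_eq_zero_of_zero_zinc (by positivity) γ₁ γ₂ γ₃,
    zipJacobian_charpoly κ γ₁ γ₂ γ₃ _, fun lam => ?_⟩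
  rw [Matrix.det_smul_one_sub, zipJacobian_charpoly]
  simp only [eval_mul, eval_pow, eval_add, eval_X, eval_one, eval_C, mul_eq_zero,
    pow_eq_zero_iff two_ne_zero, add_eq_zero_iff_eq_neg, neg_add', or_assoc]

/-- for f = 0 (zero external zinc), u* = (κ/(1+κ), 0, 1, 0) is
a steady state, the characteristic polynomial of the Jacobian there is
(X+1)²(X+κ+1)(X+γ₃+1), and the real eigenvalues are exactly −1, −(κ+1),
−(γ₃+1). -/
theorem zip_eigenvalues_at_zero_zinc
    (κ γ₁ γ₂ γ₃ : ℝ) (hκ : 0 < κ) (hγ₁ : 0 < γ₁) (hγ₂ : 0 < γ₂) (hγ₃ : 0 < γ₃) :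
    zipField κ γ₁ γ₂ γ₃ 0 ![κ / (1 + κ), 0, 1, 0] = 0 ∧
    (zipJacobian κ γ₁ γ₂ γ₃ 0 ![κ / (1 + κ), 0, 1, 0]).charpoly =
      (X + 1) ^ 2 * (X + C (κ + 1)) * (X + C (γ₃ + 1)) ∧
    (∀ lam : ℝ,
      (lam • (1 : Matrix (Fin 4) (Fin 4) ℝ) -
        zipJacobian κ γ₁ γ₂ γ₃ 0 ![κ / (1 + κ), 0, 1, 0]).det = 0 ↔
      (lam = -1 ∨ lam = -κ - 1 ∨ lam = -γ₃ - 1)) :=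
  zip_eigenvalues_at_zero_zinc_general κ γ₁ γ₂ γ₃ hκ
end

section
/- Fix κ, γ₁, γ₂, γ₃, K > 0. There exists a function u* : (0,∞) → ℝ⁴ of class C^∞ such that for every μ > 0, u*(μ) is the unique point in [0,1]⁴ satisfying F(u*(μ), μ) = 0, where F(·, μ) is the ZIP regulatory vector field with f = μ/(μ+K); i.e. the unique steady state in [0,1]⁴ depends smoothly on the external zinc concentration μ. -/
open Set Filter Topology

namespace ZipAux

/-- u₂ as a function of x = u₃. -/
noncomputable def zC (γ₁ x : ℝ) : ℝ := (1 + γ₁ * x)⁻¹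
/-- u₀ as a function of x = u₃. -/
noncomputable def zD (κ γ₁ x : ℝ) : ℝ := κ / ((1 + γ₁ * x) ^ 2 + κ)
/-- numerator of ψ. -/
noncomputable def zN (γ₁ γ₃ x : ℝ) : ℝ := x * (1 + γ₃ * zC γ₁ x)
/-- denominator of ψ. -/
noncomputable def zB (κ γ₁ γ₂ x : ℝ) : ℝ := γ₂ * zD κ γ₁ x * (1 - x)
/-- ψ(x) = p is the scalar steady state equation. -/
noncomputable def zPsi (κ γ₁ γ₂ γ₃ x : ℝ) : ℝ := zN γ₁ γ₃ x / zB κ γ₁ γ₂ x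

variable {κ γ₁ γ₂ γ₃ : ℝ}

lemma A_pos (hγ₁ : 0 < γ₁) {x : ℝ} (hx : 0 ≤ x) : 0 < 1 + γ₁ * x := by nlinarith

lemma q_pos (hκ : 0 < κ) (x : ℝ) : 0 < (1 + γ₁ * x) ^ 2 + κ := by positivity

lemma zD_pos (hκ : 0 < κ) (x : ℝ) : 0 < zD κ γ₁ x := div_pos hκ (q_pos hκ x)

lemma zD_le_one (hκ : 0 < κ) (x : ℝ) : zD κ γ₁ x ≤ 1 := by
  rw [zD, div_le_one (q_pos hκ x)]; nlinarith [sq_nonneg (1 + γ₁ * x)]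

lemma zC_pos (hγ₁ : 0 < γ₁) {x : ℝ} (hx : 0 ≤ x) : 0 < zC γ₁ x :=
  inv_pos.2 (A_pos hγ₁ hx)

lemma zC_le_one (hγ₁ : 0 < γ₁) {x : ℝ} (hx : 0 ≤ x) : zC γ₁ x ≤ 1 := by
  rw [zC]; rw [inv_le_one_iff₀]; right; nlinarith

lemma zN_nonneg (hγ₁ : 0 < γ₁) (hγ₃ : 0 < γ₃) {x : ℝ} (hx : 0 ≤ x) : 0 ≤ zN γ₁ γ₃ x := by
  have := zC_pos hγ₁ hx
  rw [zN]; positivity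

lemma zB_pos (hκ : 0 < κ) (hγ₂ : 0 < γ₂) {x : ℝ} (hx1 : x < 1) : 0 < zB κ γ₁ γ₂ x := by
  have := zD_pos (γ₁ := γ₁) hκ x
  rw [zB]; have : 0 < 1 - x := by linarith
  positivity

lemma zN_strictMono (hγ₁ : 0 < γ₁) (hγ₃ : 0 < γ₃) {a b : ℝ} (ha : 0 ≤ a) (hab : a < b) :
    zN γ₁ γ₃ a < zN γ₁ γ₃ b := by
  have hA : 0 < 1 + γ₁ * a := A_pos hγ₁ ha
  have hB : 0 < 1 + γ₁ * b := A_pos hγ₁ (by linarith)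
  have key : a / (1 + γ₁ * a) ≤ b / (1 + γ₁ * b) := by
    rw [div_le_div_iff₀ hA hB]; nlinarith
  have hN : ∀ x : ℝ, zN γ₁ γ₃ x = x + γ₃ * (x / (1 + γ₁ * x)) := by
    intro x; rw [zN, zC]; ring
  rw [hN, hN]; nlinarith

lemma zB_strictAnti (hκ : 0 < κ) (hγ₁ : 0 < γ₁) (hγ₂ : 0 < γ₂) {a b : ℝ}
    (ha : 0 ≤ a) (hab : a < b) (hb : b < 1) : zB κ γ₁ γ₂ b < zB κ γ₁ γ₂ a := by
  have hDa := zD_pos (γ₁ := γ₁) hκ a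
  have hDb := zD_pos (γ₁ := γ₁) hκ b
  have hD : zD κ γ₁ b ≤ zD κ γ₁ a := by
    rw [zD, zD]
    gcongr

  rw [zB, zB]
  have h1 : 0 < 1 - b := by linarith
  calc γ₂ * zD κ γ₁ b * (1 - b) ≤ γ₂ * zD κ γ₁ a * (1 - b) := by
        have : 0 ≤ 1 - b := h1.le
        gcongr
    _ < γ₂ * zD κ γ₁ a * (1 - a) := by gcongr

lemma zPsi_strictMono (hκ : 0 < κ) (hγ₁ : 0 < γ₁) (hγ₂ : 0 < γ₂) (hγ₃ : 0 < γ₃)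
    {a b : ℝ} (ha : 0 ≤ a) (hab : a < b) (hb : b < 1) :
    zPsi κ γ₁ γ₂ γ₃ a < zPsi κ γ₁ γ₂ γ₃ b := by
  have hBa := zB_pos (γ₁ := γ₁) hκ hγ₂ (show a < 1 by linarith)
  have hBb := zB_pos (γ₁ := γ₁) hκ hγ₂ hb
  have hNa := zN_nonneg hγ₁ hγ₃ ha
  have hNab := zN_strictMono hγ₁ hγ₃ ha hab
  have hBab := zB_strictAnti hκ hγ₁ hγ₂ ha hab hb
  rw [zPsi, zPsi]
  calc zN γ₁ γ₃ a / zB κ γ₁ γ₂ a ≤ zN γ₁ γ₃ a / zB κ γ₁ γ₂ b := by gcongr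
    _ < zN γ₁ γ₃ b / zB κ γ₁ γ₂ b := by gcongr

lemma root_unique (hκ : 0 < κ) (hγ₁ : 0 < γ₁) (hγ₂ : 0 < γ₂) (hγ₃ : 0 < γ₃)
    {p a b : ℝ} (ha : 0 ≤ a ∧ a < 1) (hb : 0 ≤ b ∧ b < 1)
    (hpa : zPsi κ γ₁ γ₂ γ₃ a = p) (hpb : zPsi κ γ₁ γ₂ γ₃ b = p) : a = b := by
  rcases lt_trichotomy a b with h | h | h
  · have := zPsi_strictMono hκ hγ₁ hγ₂ hγ₃ ha.1 h hb.2
    rw [hpa, hpb] at this; exact absurd this (lt_irrefl p)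
  · exact h
  · have := zPsi_strictMono hκ hγ₁ hγ₂ hγ₃ hb.1 h ha.2
    rw [hpb, hpa] at this; exact absurd this (lt_irrefl p)


lemma zD_contDiffAt (hκ : 0 < κ) (x : ℝ) : ContDiffAt ℝ (⊤ : ℕ∞) (zD κ γ₁) x := by
  have : zD κ γ₁ = fun y : ℝ => κ / ((1 + γ₁ * y) ^ 2 + κ) := rfl
  rw [this]
  exact contDiffAt_const.div
    (((contDiffAt_const.add (contDiffAt_const.mul contDiffAt_id)).pow 2).add contDiffAt_const)
    (q_pos hκ x).ne'

lemma zC_contDiffAt (hγ₁ : 0 < γ₁) {x : ℝ} (hx : 0 ≤ x) : ContDiffAt ℝ (⊤ : ℕ∞) (zC γ₁) x := by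
  have : zC γ₁ = fun y : ℝ => (1 + γ₁ * y)⁻¹ := rfl
  rw [this]
  exact (contDiffAt_const.add (contDiffAt_const.mul contDiffAt_id)).inv (A_pos hγ₁ hx).ne'

lemma zPsi_contDiffAt (hκ : 0 < κ) (hγ₁ : 0 < γ₁) (hγ₂ : 0 < γ₂) (hγ₃ : 0 < γ₃)
    {x : ℝ} (hx0 : 0 ≤ x) (hx1 : x < 1) : ContDiffAt ℝ (⊤ : ℕ∞) (zPsi κ γ₁ γ₂ γ₃) x := by
  have hN : ContDiffAt ℝ (⊤ : ℕ∞) (zN γ₁ γ₃) x := by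
    have : zN γ₁ γ₃ = fun y : ℝ => y * (1 + γ₃ * zC γ₁ y) := rfl
    rw [this]
    exact contDiffAt_id.mul (contDiffAt_const.add (contDiffAt_const.mul (zC_contDiffAt hγ₁ hx0)))
  have hB : ContDiffAt ℝ (⊤ : ℕ∞) (zB κ γ₁ γ₂) x := by
    have : zB κ γ₁ γ₂ = fun y : ℝ => γ₂ * zD κ γ₁ y * (1 - y) := rfl
    rw [this]
    exact (contDiffAt_const.mul (zD_contDiffAt hκ x)).mul (contDiffAt_const.sub contDiffAt_id)
  have : zPsi κ γ₁ γ₂ γ₃ = fun y : ℝ => zN γ₁ γ₃ y / zB κ γ₁ γ₂ y := rfl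
  rw [this]
  exact hN.div hB (zB_pos hκ hγ₂ hx1).ne'

lemma zPsi_zero : zPsi κ γ₁ γ₂ γ₃ 0 = 0 := by
  simp [zPsi, zN]

lemma exists_root (hκ : 0 < κ) (hγ₁ : 0 < γ₁) (hγ₂ : 0 < γ₂) (hγ₃ : 0 < γ₃)
    {p : ℝ} (hp : 0 < p) : ∃ x, (0 < x ∧ x < 1) ∧ zPsi κ γ₁ γ₂ γ₃ x = p := by
  set ε : ℝ := min (1/2) (1/(2*γ₂*p+1)) with hε
  have hε0 : 0 < ε := by
    apply lt_min (by norm_num)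
    positivity
  have hεle : ε ≤ 1/2 := min_le_left _ _
  have hεle2 : ε ≤ 1/(2*γ₂*p+1) := min_le_right _ _
  set x₀ : ℝ := 1 - ε with hx₀
  have hx₀0 : (0:ℝ) ≤ x₀ := by simp only [hx₀]; linarith
  have hx₀half : (1:ℝ)/2 ≤ x₀ := by simp only [hx₀]; linarith
  have hx₀1 : x₀ < 1 := by simp only [hx₀]; linarith
  -- ψ(x₀) ≥ x₀ / (γ₂ * ε) > p
  have hge : x₀ / (γ₂ * ε) ≤ zPsi κ γ₁ γ₂ γ₃ x₀ := by
    rw [zPsi]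
    have hNge : x₀ ≤ zN γ₁ γ₃ x₀ := by
      have hc := zC_pos hγ₁ hx₀0
      have h2 : zN γ₁ γ₃ x₀ = x₀ * (1 + γ₃ * zC γ₁ x₀) := rfl
      nlinarith [mul_nonneg hx₀0 (mul_pos hγ₃ hc).le]
    have hBle : zB κ γ₁ γ₂ x₀ ≤ γ₂ * ε := by
      have hd1 := zD_le_one (γ₁ := γ₁) hκ x₀
      have hd0 := zD_pos (γ₁ := γ₁) hκ x₀
      have : zB κ γ₁ γ₂ x₀ = γ₂ * zD κ γ₁ x₀ * (1 - x₀) := rfl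
      rw [this, hx₀]
      have h1 : (1 : ℝ) - (1 - ε) = ε := by ring
      rw [h1]
      nlinarith [mul_nonneg (mul_pos hγ₂ hε0).le (sub_nonneg.2 hd1)]
    have hB0 := zB_pos (γ₁ := γ₁) hκ hγ₂ hx₀1
    gcongr
    exact zN_nonneg hγ₁ hγ₃ hx₀0
  have hgt : p < x₀ / (γ₂ * ε) := by
    rw [lt_div_iff₀ (by positivity)]
    have : ε * (2*γ₂*p+1) ≤ 1 := by
      rw [← le_div_iff₀ (by positivity)] at *
      exact hεle2
    nlinarith
  have hcont : ContinuousOn (zPsi κ γ₁ γ₂ γ₃) (Icc 0 x₀) := fun y hy =>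
    (zPsi_contDiffAt hκ hγ₁ hγ₂ hγ₃ hy.1 (lt_of_le_of_lt hy.2 hx₀1)).continuousAt.continuousWithinAt
  have hIVT := intermediate_value_Icc hx₀0 hcont
  have hpmem : p ∈ Icc (zPsi κ γ₁ γ₂ γ₃ 0) (zPsi κ γ₁ γ₂ γ₃ x₀) := by
    rw [zPsi_zero]
    exact ⟨hp.le, le_trans hgt.le hge⟩
  obtain ⟨x, hx, hxp⟩ := hIVT hpmem
  refine ⟨x, ⟨?_, lt_of_le_of_lt hx.2 hx₀1⟩, hxp⟩
  rcases eq_or_lt_of_le hx.1 with h | h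
  · exfalso; rw [← h] at hxp; rw [zPsi_zero] at hxp; linarith
  · exact h

open Classical in
/-- The root of ψ(x) = p in [0,1). -/
noncomputable def zX (κ γ₁ γ₂ γ₃ p : ℝ) : ℝ :=
  if h : ∃ x, (0 < x ∧ x < 1) ∧ zPsi κ γ₁ γ₂ γ₃ x = p then h.choose else 0

lemma zX_spec (hκ : 0 < κ) (hγ₁ : 0 < γ₁) (hγ₂ : 0 < γ₂) (hγ₃ : 0 < γ₃)
    {p : ℝ} (hp : 0 < p) :
    (0 < zX κ γ₁ γ₂ γ₃ p ∧ zX κ γ₁ γ₂ γ₃ p < 1) ∧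
      zPsi κ γ₁ γ₂ γ₃ (zX κ γ₁ γ₂ γ₃ p) = p := by
  have hex := exists_root hκ hγ₁ hγ₂ hγ₃ hp
  rw [zX, dif_pos hex]
  exact hex.choose_spec


lemma zPsi_hasDerivAt (hκ : 0 < κ) (hγ₁ : 0 < γ₁) (hγ₂ : 0 < γ₂) (hγ₃ : 0 < γ₃)
    {x : ℝ} (hx0 : 0 ≤ x) (hx1 : x < 1) :
    ∃ m, 0 < m ∧ HasDerivAt (zPsi κ γ₁ γ₂ γ₃) m x := by
  have hA : 0 < 1 + γ₁ * x := A_pos hγ₁ hx0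
  have hq : 0 < (1 + γ₁ * x) ^ 2 + κ := q_pos hκ x
  -- derivative of the affine function 1 + γ₁ * y
  have haff : HasDerivAt (fun y : ℝ => 1 + γ₁ * y) γ₁ x := by
    simpa using ((hasDerivAt_id x).const_mul γ₁).const_add 1
  -- derivative of zC
  have hc : HasDerivAt (zC γ₁) (-γ₁ / (1 + γ₁ * x) ^ 2) x := by
    have := haff.inv hA.ne'
    exact this
  -- derivative of zN
  set nN : ℝ := 1 * (1 + γ₃ * zC γ₁ x) + x * (γ₃ * (-γ₁ / (1 + γ₁ * x) ^ 2)) with hnN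
  have hN : HasDerivAt (zN γ₁ γ₃) nN x := by
    have : HasDerivAt (fun y : ℝ => y * (1 + γ₃ * zC γ₁ y)) nN x :=
      (hasDerivAt_id x).mul ((hc.const_mul γ₃).const_add 1)
    exact this
  have hnNpos : 0 < nN := by
    have h1 : nN = 1 + γ₃ / (1 + γ₁ * x) ^ 2 := by
      rw [hnN, zC]
      field_simp
      ring
    rw [h1]; positivity
  -- derivative of zD
  have hqd : HasDerivAt (fun y : ℝ => (1 + γ₁ * y) ^ 2 + κ) (2 * (1 + γ₁ * x) ^ 1 * γ₁) x := by
    exact (haff.pow 2).add_const κ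
  set dN : ℝ := (0 * ((1 + γ₁ * x) ^ 2 + κ) - κ * (2 * (1 + γ₁ * x) ^ 1 * γ₁)) /
      ((1 + γ₁ * x) ^ 2 + κ) ^ 2 with hdN
  have hD : HasDerivAt (zD κ γ₁) dN x := by
    have : HasDerivAt (fun y : ℝ => κ / ((1 + γ₁ * y) ^ 2 + κ)) dN x :=
      (hasDerivAt_const x κ).div hqd hq.ne'
    exact this
  have hdNneg : dN ≤ 0 := by
    rw [hdN]
    apply div_nonpos_of_nonpos_of_nonneg
    · have h9 : 0 < κ * (2 * (1 + γ₁ * x) ^ 1 * γ₁) := by positivity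
      linarith
    · positivity
  -- derivative of zB
  set bN : ℝ := γ₂ * dN * (1 - x) + γ₂ * zD κ γ₁ x * (-1) with hbN
  have hB : HasDerivAt (zB κ γ₁ γ₂) bN x := by
    have h1 : HasDerivAt (fun y : ℝ => 1 - y) (-1 : ℝ) x := by
      simpa using (hasDerivAt_id x).const_sub 1
    have : HasDerivAt (fun y : ℝ => γ₂ * zD κ γ₁ y * (1 - y))
        ((γ₂ * dN) * (1 - x) + (γ₂ * zD κ γ₁ x) * (-1)) x := (hD.const_mul γ₂).mul h1
    exact this
  have hbNneg : bN < 0 := by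
    have hd0 := zD_pos (γ₁ := γ₁) hκ x
    have h7 : 0 < 1 - x := by linarith
    have h8 : 0 ≤ γ₂ * -dN * (1 - x) :=
      mul_nonneg (mul_nonneg hγ₂.le (neg_nonneg.2 hdNneg)) h7.le
    nlinarith [mul_pos hγ₂ hd0]
  -- derivative of zPsi
  have hBp := zB_pos (γ₁ := γ₁) hκ hγ₂ hx1
  set m : ℝ := (nN * zB κ γ₁ γ₂ x - zN γ₁ γ₃ x * bN) / zB κ γ₁ γ₂ x ^ 2 with hm
  refine ⟨m, ?_, ?_⟩
  · have hNn := zN_nonneg hγ₁ hγ₃ hx0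
    rw [hm]
    apply div_pos
    · nlinarith
    · positivity
  · have : HasDerivAt (fun y => zN γ₁ γ₃ y / zB κ γ₁ γ₂ y) m x := hN.div hB hBp.ne'
    exact this

lemma zX_contDiffAt (hκ : 0 < κ) (hγ₁ : 0 < γ₁) (hγ₂ : 0 < γ₂) (hγ₃ : 0 < γ₃)
    {p₀ : ℝ} (hp₀ : 0 < p₀) : ContDiffAt ℝ (⊤ : ℕ∞) (zX κ γ₁ γ₂ γ₃) p₀ := by
  obtain ⟨⟨hx0, hx1⟩, hroot⟩ := zX_spec hκ hγ₁ hγ₂ hγ₃ hp₀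
  set x₀ := zX κ γ₁ γ₂ γ₃ p₀ with hx₀
  have hcd := zPsi_contDiffAt hκ hγ₁ hγ₂ hγ₃ hx0.le hx1
  obtain ⟨m, hm, hder⟩ := zPsi_hasDerivAt hκ hγ₁ hγ₂ hγ₃ hx0.le hx1
  have hfd := hder.hasFDerivAt_equiv hm.ne'
  -- the local inverse of ψ near x₀
  have hn0 : ((⊤ : ℕ∞) : WithTop ℕ∞) ≠ 0 := by simp
  set g := hcd.localInverse hfd hn0 with hg
  have hgsm : ContDiffAt ℝ (⊤ : ℕ∞) g (zPsi κ γ₁ γ₂ γ₃ x₀) := hcd.to_localInverse hfd hn0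
  rw [hroot] at hgsm
  have hstrict := hcd.hasStrictFDerivAt' hfd hn0
  have hgx : g p₀ = x₀ := by
    have := hcd.localInverse_apply_image hfd hn0
    rw [hroot] at this
    exact this
  have hri : ∀ᶠ q in 𝓝 p₀, zPsi κ γ₁ γ₂ γ₃ (g q) = q := by
    have := hstrict.eventually_right_inverse
    rw [hroot] at this
    exact this
  have hmem : ∀ᶠ q in 𝓝 p₀, g q ∈ Ioo (0:ℝ) 1 := by
    have hcont : ContinuousAt g p₀ := hgsm.continuousAt
    have : Ioo (0:ℝ) 1 ∈ 𝓝 (g p₀) := by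
      rw [hgx]; exact isOpen_Ioo.mem_nhds ⟨hx0, hx1⟩
    exact hcont.eventually_mem this
  have hpos : ∀ᶠ q in 𝓝 p₀, 0 < q := eventually_gt_nhds hp₀
  have heq : zX κ γ₁ γ₂ γ₃ =ᶠ[𝓝 p₀] g := by
    filter_upwards [hri, hmem, hpos] with q hq1 hq2 hq3
    obtain ⟨⟨h1, h2⟩, h3⟩ := zX_spec hκ hγ₁ hγ₂ hγ₃ hq3
    exact root_unique hκ hγ₁ hγ₂ hγ₃ ⟨h1.le, h2⟩ ⟨hq2.1.le, hq2.2⟩ h3 hq1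
  exact hgsm.congr_of_eventuallyEq heq

end ZipAux

namespace ZipAux

variable {κ γ₁ γ₂ γ₃ : ℝ}

lemma steady_char (hκ : 0 < κ) (hγ₁ : 0 < γ₁) (hγ₂ : 0 < γ₂) (hγ₃ : 0 < γ₃)
    {p : ℝ} (hp : 0 < p) {v : Fin 4 → ℝ} (hv : ∀ i, v i ∈ Set.Icc (0:ℝ) 1)
    (hF : zipField κ γ₁ γ₂ γ₃ p v = 0) :
    (0 ≤ v 3 ∧ v 3 < 1) ∧ zPsi κ γ₁ γ₂ γ₃ (v 3) = p ∧
      v 2 = zC γ₁ (v 3) ∧ v 0 = zD κ γ₁ (v 3) ∧ v 1 = p * zD κ γ₁ (v 3) := by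
  have e0 : κ * (v 2) ^ 2 * (1 - v 0) - v 0 = 0 := congrFun hF 0
  have e1 : v 0 * p - v 1 = 0 := congrFun hF 1
  have e2 : 1 - γ₁ * v 2 * v 3 - v 2 = 0 := congrFun hF 2
  have e3 : γ₂ * v 1 - γ₃ * v 2 * v 3 - (1 + γ₂ * v 1) * v 3 = 0 := congrFun hF 3
  have h30 : 0 ≤ v 3 := (hv 3).1
  have h31 : v 3 ≤ 1 := (hv 3).2
  have hA : 0 < 1 + γ₁ * v 3 := A_pos hγ₁ h30
  have hq : 0 < (1 + γ₁ * v 3) ^ 2 + κ := q_pos hκ _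
  have h2 : v 2 = zC γ₁ (v 3) := by
    rw [zC]
    field_simp
    linear_combination -e2
  have h0 : v 0 = zD κ γ₁ (v 3) := by
    rw [h2, zC] at e0
    field_simp at e0
    have key : v 0 * ((1 + γ₁ * v 3) ^ 2 + κ) = κ := by linear_combination -e0
    rw [zD, eq_div_iff hq.ne']
    exact key
  have h1 : v 1 = p * zD κ γ₁ (v 3) := by
    rw [← h0]; linarith
  have hlt : v 3 < 1 := by
    rcases lt_or_eq_of_le h31 with h | h
    · exact h
    · exfalso
      have hc := zC_pos hγ₁ h30
      rw [h1, h2, h] at e3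
      rw [h] at hc
      nlinarith [zD_pos (γ₁ := γ₁) hκ (1:ℝ), mul_pos hγ₃ hc]
  refine ⟨⟨h30, hlt⟩, ?_, h2, h0, h1⟩
  have hB := zB_pos (γ₁ := γ₁) hκ hγ₂ hlt
  rw [zPsi, div_eq_iff hB.ne']
  rw [h1, h2] at e3
  simp only [zN, zB, zC, zD] at e3 ⊢
  linear_combination -e3


lemma steady_forward (hκ : 0 < κ) (hγ₁ : 0 < γ₁) (hγ₂ : 0 < γ₂) (hγ₃ : 0 < γ₃)
    {p x : ℝ} (hx0 : 0 ≤ x) (hx1 : x < 1)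
    (hroot : zPsi κ γ₁ γ₂ γ₃ x = p) :
    zipField κ γ₁ γ₂ γ₃ p ![zD κ γ₁ x, p * zD κ γ₁ x, zC γ₁ x, x] = 0 := by
  have hA : 0 < 1 + γ₁ * x := A_pos hγ₁ hx0
  have hq : 0 < (1 + γ₁ * x) ^ 2 + κ := q_pos hκ x
  have hB := zB_pos (γ₁ := γ₁) hκ hγ₂ hx1
  have hNB : zN γ₁ γ₃ x = p * zB κ γ₁ γ₂ x := by
    rw [zPsi, div_eq_iff hB.ne'] at hroot
    exact hroot
  funext i
  fin_cases i
  · show κ * zC γ₁ x ^ 2 * (1 - zD κ γ₁ x) - zD κ γ₁ x = 0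
    rw [zC, zD]; field_simp
    ring
  · show zD κ γ₁ x * p - p * zD κ γ₁ x = 0
    ring
  · show 1 - γ₁ * zC γ₁ x * x - zC γ₁ x = 0
    rw [zC]; field_simp
    ring
  · show γ₂ * (p * zD κ γ₁ x) - γ₃ * zC γ₁ x * x - (1 + γ₂ * (p * zD κ γ₁ x)) * x = 0
    simp only [zN, zB, zC, zD] at hNB
    simp only [zC, zD]
    linear_combination -hNB

lemma steady_mem (hκ : 0 < κ) (hγ₁ : 0 < γ₁) (hγ₂ : 0 < γ₂) (hγ₃ : 0 < γ₃)
    {p x : ℝ} (hp0 : 0 ≤ p) (hp1 : p ≤ 1) (hx0 : 0 ≤ x) (hx1 : x ≤ 1) :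
    ∀ i, (![zD κ γ₁ x, p * zD κ γ₁ x, zC γ₁ x, x] : Fin 4 → ℝ) i ∈ Set.Icc (0:ℝ) 1 := by
  have hd0 := zD_pos (γ₁ := γ₁) hκ x
  have hd1 := zD_le_one (γ₁ := γ₁) hκ x
  have hc0 := zC_pos hγ₁ hx0
  have hc1 := zC_le_one hγ₁ hx0
  intro i
  fin_cases i
  · exact ⟨hd0.le, hd1⟩
  · show p * zD κ γ₁ x ∈ Set.Icc (0:ℝ) 1
    constructor
    · positivity
    · nlinarith
  · exact ⟨hc0.le, hc1⟩
  · exact ⟨hx0, hx1⟩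

lemma vec_eq {v : Fin 4 → ℝ} {a b c d : ℝ}
    (h0 : v 0 = a) (h1 : v 1 = b) (h2 : v 2 = c) (h3 : v 3 = d) :
    v = ![a, b, c, d] := by
  funext i
  fin_cases i
  · exact h0
  · exact h1
  · exact h2
  · exact h3

end ZipAux

/-- the unique steady state in [0,1]⁴ of the ZIP regulatory
system with f = μ/(μ+K) depends smoothly (C^∞) on the external zinc
concentration μ > 0. -/
theorem zip_steady_state_smooth_in_mu
    (κ γ₁ γ₂ γ₃ K : ℝ) (hκ : 0 < κ) (hγ₁ : 0 < γ₁) (hγ₂ : 0 < γ₂) (hγ₃ : 0 < γ₃)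
    (hK : 0 < K) :
    ∃ ustar : ℝ → Fin 4 → ℝ,
      ContDiffOn ℝ (⊤ : ℕ∞) ustar (Set.Ioi (0 : ℝ)) ∧
      ∀ μ > (0 : ℝ),
        ((∀ i, ustar μ i ∈ Set.Icc (0 : ℝ) 1) ∧
          zipField κ γ₁ γ₂ γ₃ (μ / (μ + K)) (ustar μ) = 0) ∧
        ∀ v : Fin 4 → ℝ, (∀ i, v i ∈ Set.Icc (0 : ℝ) 1) →
          zipField κ γ₁ γ₂ γ₃ (μ / (μ + K)) v = 0 → v = ustar μ := by
  classical
  open ZipAux in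
  refine ⟨fun μ => ![zD κ γ₁ (zX κ γ₁ γ₂ γ₃ (μ / (μ + K))),
      (μ / (μ + K)) * zD κ γ₁ (zX κ γ₁ γ₂ γ₃ (μ / (μ + K))),
      zC γ₁ (zX κ γ₁ γ₂ γ₃ (μ / (μ + K))),
      zX κ γ₁ γ₂ γ₃ (μ / (μ + K))], ?_, ?_⟩
  · -- smoothness
    intro μ hμ
    have hμ0 : 0 < μ := hμ
    have hμK : 0 < μ + K := by linarith
    have hp : 0 < μ / (μ + K) := div_pos hμ0 hμK
    have hP : ContDiffAt ℝ (⊤ : ℕ∞) (fun t : ℝ => t / (t + K)) μ :=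
      contDiffAt_id.div (contDiffAt_id.add contDiffAt_const) hμK.ne'
    have hX : ContDiffAt ℝ (⊤ : ℕ∞) (fun t : ℝ => zX κ γ₁ γ₂ γ₃ (t / (t + K))) μ :=
      (zX_contDiffAt hκ hγ₁ hγ₂ hγ₃ hp).comp (g := zX κ γ₁ γ₂ γ₃) μ hP
    have hXpos : 0 < zX κ γ₁ γ₂ γ₃ (μ / (μ + K)) :=
      (zX_spec hκ hγ₁ hγ₂ hγ₃ hp).1.1
    apply ContDiffAt.contDiffWithinAt
    apply contDiffAt_pi.2
    intro i
    fin_cases i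
    · exact (zD_contDiffAt hκ _).comp μ hX
    · exact hP.mul ((zD_contDiffAt hκ _).comp μ hX)
    · show ContDiffAt ℝ (⊤ : ℕ∞) (fun t : ℝ => zC γ₁ (zX κ γ₁ γ₂ γ₃ (t / (t + K)))) μ
      exact (zC_contDiffAt hγ₁ hXpos.le).comp (g := zC γ₁) μ hX
    · exact hX
  · -- steady state properties
    intro μ hμ0
    have hμK : 0 < μ + K := by linarith
    have hp : 0 < μ / (μ + K) := div_pos hμ0 hμK
    have hp1 : μ / (μ + K) < 1 := by
      rw [div_lt_one hμK]; linarith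
    obtain ⟨⟨hx0, hx1⟩, hroot⟩ := ZipAux.zX_spec hκ hγ₁ hγ₂ hγ₃ hp
    refine ⟨⟨ZipAux.steady_mem hκ hγ₁ hγ₂ hγ₃ hp.le hp1.le hx0.le hx1.le,
      ZipAux.steady_forward hκ hγ₁ hγ₂ hγ₃ hx0.le hx1 hroot⟩, ?_⟩
    intro v hv hFv
    obtain ⟨⟨h30, h31⟩, hpsiv, h2, h0, h1⟩ :=
      ZipAux.steady_char hκ hγ₁ hγ₂ hγ₃ hp hv hFv
    have h3x : v 3 = zX κ γ₁ γ₂ γ₃ (μ / (μ + K)) :=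
      ZipAux.root_unique hκ hγ₁ hγ₂ hγ₃ ⟨h30, h31⟩ ⟨hx0.le, hx1⟩ hpsiv hroot
    exact ZipAux.vec_eq (by rw [h0, h3x]) (by rw [h1, h3x]) (by rw [h2, h3x]) h3x
end
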